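/- arXiv:1510.07882 — 4 statements merged into one kernel-verified Lean document; each statement's English description precedes it below -/
import Mathlib

section
/- Let n ≥ 6 and let f : {2,...,⌊n/2⌋} → ℝ≥0 be strictly increasing (extended to arguments via min(l, n-l)). Then for all m ∈ {2,...,n-2} and p ∈ {1,...,n-3-m}, the inequality ∑_{l=2}^{m} f(min(l, n-l)) < ∑_{l=2+p}^{m+p} f(min(l, n-l)) holds. -/
/-!
Write `g l = f (min l (n - l))` and let `2 ≤ s`. Sliding a window `[s, t]` one step to the right
replaces `g s` by `g (t + 1)`, a strict gain as long as `s + (t + 1) < n`, because then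
`min (t + 1) (n - t - 1) > s = min s (n - s)`. The window `[2, m]` can therefore be slid up to
`[2 + p, m + p]` with a strict gain whenever the target lies left of the centre. Otherwise the
symmetry `g (n - l) = g l` reflects the target to `[n - m - p, n - 2 - p]`, which lies left of the
centre and strictly right of `[2, m]` since `m + p ≤ n - 3`.
-/

open Finset

section SlidingWindow

variable {M : Type*} [AddCommMonoid M] [PartialOrder M] [IsOrderedCancelAddMonoid M]

theorem Finset.sum_Icc_lt_sum_Icc_add_one {g : ℕ → M} {a b : ℕ} (hab : a ≤ b)
    (h : g a < g (b + 1)) :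
    ∑ l ∈ Icc a b, g l < ∑ l ∈ Icc (a + 1) (b + 1), g l := by
  have hbot : ∑ l ∈ Icc a (b + 1), g l = g a + ∑ l ∈ Icc (a + 1) (b + 1), g l := by
    rw [Icc_eq_cons_Ioc (by omega), sum_cons, Icc_add_one_left_eq_Ioc]
  refine lt_of_add_lt_add_right (a := g a) ?_
  calc ∑ l ∈ Icc a b, g l + g a < ∑ l ∈ Icc a b, g l + g (b + 1) := by gcongr
    _ = ∑ l ∈ Icc (a + 1) (b + 1), g l + g a := by
      rw [← sum_Icc_succ_top (by omega), hbot, add_comm]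

theorem Finset.sum_Icc_lt_sum_Icc_add {g : ℕ → M} {a b j : ℕ} (hab : a ≤ b) (hj : 0 < j)
    (h : ∀ i < j, g (a + i) < g (b + i + 1)) :
    ∑ l ∈ Icc a b, g l < ∑ l ∈ Icc (a + j) (b + j), g l := by
  induction j, hj using Nat.le_induction with
  | base => exact sum_Icc_lt_sum_Icc_add_one hab (h 0 one_pos)
  | succ j hj ih =>
    exact (ih fun i hi => h i (by omega)).trans
      (sum_Icc_lt_sum_Icc_add_one (by omega) (h j (by omega)))

end SlidingWindow

theorem Finset.sum_Icc_const_sub {M : Type*} [AddCommMonoid M] (g : ℕ → M) {a b n : ℕ}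
    (ha : a ≤ n) (hb : b ≤ n) :
    ∑ l ∈ Icc a b, g (n - l) = ∑ l ∈ Icc (n - b) (n - a), g l := by
  refine sum_nbij' (n - ·) (n - ·) ?_ ?_ ?_ ?_ fun _ _ => rfl <;> intro l hl <;>
    simp only [mem_Icc] at hl ⊢ <;> omega

theorem apply_min_sub_lt_apply_min_sub {β : Type*} [Preorder β] {n : ℕ} {f : ℕ → β}
    (hf : StrictMonoOn f (Set.Icc 2 (n / 2))) {s t : ℕ}
    (hs : 2 ≤ s) (hst : s < t) (hn : s + t < n) :
    f (min s (n - s)) < f (min t (n - t)) := by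
  rw [min_eq_left (by omega)]
  exact hf ⟨hs, by omega⟩ ⟨by omega, by omega⟩ (by omega)

theorem sum_Icc_two_lt_sum_Icc_add {β : Type*} [AddCommMonoid β] [PartialOrder β]
    [IsOrderedCancelAddMonoid β] {n : ℕ} {f : ℕ → β}
    (hf : StrictMonoOn f (Set.Icc 2 (n / 2))) {m j : ℕ} (hm : 2 ≤ m) (hj : 0 < j)
    (hjn : m + 2 * j + 2 ≤ n) :
    ∑ l ∈ Icc 2 m, f (min l (n - l)) < ∑ l ∈ Icc (2 + j) (m + j), f (min l (n - l)) :=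
  sum_Icc_lt_sum_Icc_add hm hj fun _ _ =>
    apply_min_sub_lt_apply_min_sub hf le_self_add (by omega) (by omega)

theorem stmt_0_general (n : ℕ) (f : ℕ → ℝ)
    (hf : ∀ a b, 2 ≤ a → a < b → b ≤ n / 2 → f a < f b) :
    ∀ m, 2 ≤ m → m ≤ n - 2 → ∀ p, 1 ≤ p → p ≤ n - 3 - m →
      ∑ l ∈ Finset.Icc 2 m, f (min l (n - l)) <
        ∑ l ∈ Finset.Icc (2 + p) (m + p), f (min l (n - l)) := by
  intro m hm _ p hp hpm
  have hmono : StrictMonoOn f (Set.Icc 2 (n / 2)) := fun a ha b hb hab => hf a b ha.1 hab hb.2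
  rcases le_or_gt (m + 2 * p + 2) n with hleft | hright
  · exact sum_Icc_two_lt_sum_Icc_add hmono hm hp hleft
  · have hsymm : ∀ l ∈ Icc (2 + p) (m + p), f (min l (n - l)) =
        f (min (n - l) (n - (n - l))) := fun l hl => by
      rw [mem_Icc] at hl
      rw [Nat.sub_sub_self (by omega), min_comm]
    rw [sum_congr rfl hsymm,
      sum_Icc_const_sub (fun l => f (min l (n - l))) (by omega) (by omega)]
    have hwindow : Icc (n - (m + p)) (n - (2 + p)) =
        Icc (2 + (n - m - p - 2)) (m + (n - m - p - 2)) := by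
      congr 1 <;> omega
    rw [hwindow]
    exact sum_Icc_two_lt_sum_Icc_add hmono hm (by omega) (by omega)

/-- Lemma 1 (turmsum): for `n ≥ 6` and `f` strictly increasing on `{2,…,⌊n/2⌋}`
(applied via `min(l, n-l)`), shifting the summation window strictly increases the sum. -/
theorem stmt_0 (n : ℕ) (hn : 6 ≤ n) (f : ℕ → ℝ)
    (hf0 : ∀ k, 2 ≤ k → k ≤ n / 2 → 0 ≤ f k)
    (hf : ∀ a b, 2 ≤ a → a < b → b ≤ n / 2 → f a < f b) :
    ∀ m, 2 ≤ m → m ≤ n - 2 → ∀ p, 1 ≤ p → p ≤ n - 3 - m →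
      ∑ l ∈ Finset.Icc 2 m, f (min l (n - l)) <
        ∑ l ∈ Finset.Icc (2 + p) (m + p), f (min l (n - l)) :=
  stmt_0_general n f hf
end

section
/- For a caterpillar tree τ_c on n ≥ 4 leaves, the increasing split size sequence is given by s(τ_c)_i = ⌊(i+3)/2⌋ for i = 1,...,n-3; equivalently, m(τ_c)_j = min(2j-2, n-3) for j = 2,...,⌊n/2⌋, where m(τ)_j = |{σ ∈ Σ*(τ) : ‖σ‖ ≤ j}|. -/
open SimpleGraph

/-- An (unrooted) phylogenetic tree on `n` leaves with vertex type `V`: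
a tree whose degree-one vertices are exactly the images of the `n` leaf labels. -/
structure PhyloTree (n : ℕ) (V : Type) [Fintype V] where
  G : SimpleGraph V
  isTree : G.IsTree
  leaf : Fin n → V
  leaf_inj : Function.Injective leaf
  leaf_iff : ∀ v : V, (G.neighborSet v).ncard = 1 ↔ ∃ i, leaf i = v

variable {n : ℕ} {V : Type} [Fintype V]

/-- Number of leaves on the `u`-side after deleting the edge `{u,v}`. -/
noncomputable def splitSide (G : SimpleGraph V) (leaf : Fin n → V) (u v : V) : ℕ :=
  {i : Fin n | (G.deleteEdges {s(u, v)}).Reachable (leaf i) u}.ncard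

/-- The size `‖σ‖ = min(|A|,|B|)` of the split induced by an edge. -/
noncomputable def splitSizeE (T : PhyloTree n V) : Sym2 V → ℕ :=
  Sym2.lift ⟨fun u v => min (splitSide T.G T.leaf u v) (splitSide T.G T.leaf v u),
    fun _ _ => min_comm _ _⟩

/-- `Φ_f(τ) = ∑_{σ ∈ Σ*(τ)} f(‖σ‖)`, the sum over non-trivial splits (inner edges). -/
noncomputable def Phi (T : PhyloTree n V) (f : ℕ → ℝ) : ℝ :=
  ∑ᶠ e ∈ {e : Sym2 V | e ∈ T.G.edgeSet ∧ 2 ≤ splitSizeE T e}, f (splitSizeE T e)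

/-- `m(τ)_j = |{σ ∈ Σ*(τ) : ‖σ‖ ≤ j}|`. -/
noncomputable def mseq (T : PhyloTree n V) (j : ℕ) : ℕ :=
  {e : Sym2 V | e ∈ T.G.edgeSet ∧ 2 ≤ splitSizeE T e ∧ splitSizeE T e ≤ j}.ncard

/-- The split size sequence `s(τ)_i = min{j : m(τ)_j ≥ i}` (the left inverse of `m(τ)`). -/
noncomputable def sseq (T : PhyloTree n V) (i : ℕ) : ℕ :=
  sInf {j | i ≤ mseq T j}

def IsLeaf (T : PhyloTree n V) (v : V) : Prop := (T.G.neighborSet v).ncard = 1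

/-- A binary (fully resolved) tree: every vertex has degree 1 or 3. -/
def IsBinary (T : PhyloTree n V) : Prop :=
  ∀ v : V, (T.G.neighborSet v).ncard = 1 ∨ (T.G.neighborSet v).ncard = 3

/-- A caterpillar: a binary tree in which every inner vertex is adjacent to a leaf
(equivalently, the inner vertices form a path / there are exactly two cherries). -/
def IsCaterpillar (T : PhyloTree n V) : Prop :=
  IsBinary T ∧ ∀ v : V, ¬ IsLeaf T v → ∃ w : V, T.G.Adj v w ∧ IsLeaf T w

/-- A single NNI move across the inner edge `{u,v}`: the subtrees hanging at `a`
(on the `u` side) and at `b` (on the `v` side) are swapped. -/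
def NNIMove (T T' : PhyloTree n V) : Prop :=
  ∃ u v a b : V, T.G.Adj u v ∧ ¬ IsLeaf T u ∧ ¬ IsLeaf T v ∧
    T.G.Adj u a ∧ T.G.Adj v b ∧ a ≠ v ∧ b ≠ u ∧
    T'.leaf = T.leaf ∧
    T'.G.edgeSet = (T.G.edgeSet \ {s(u, a), s(v, b)}) ∪ {s(u, b), s(v, a)}

/-- The number of cherries = number of non-trivial splits of size exactly 2. -/
noncomputable def numCherries (T : PhyloTree n V) : ℕ :=
  {e : Sym2 V | e ∈ T.G.edgeSet ∧ splitSizeE T e = 2}.ncard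

/-!
The inner vertices of a caterpillar form a path, each carrying a pendant leaf. Written as
`c 0, …, c (n - 1)` with leaves `c 0` and `c (n - 1)` at the ends, the edge `c i c (i + 1)` has
`i + 1` leaves on the side of `c i`, so the non-trivial splits are those of the edges with
`1 ≤ i ≤ n - 3`, of sizes `min (i + 1) (n - i - 1)`; counting those `≤ j` gives `m`, and `s` is
its left inverse.

The path is found backwards: at an inner vertex `u` of an edge `uv`, the pendant leaf and the
third neighbour `w` share the `u`-side, so `splitSide u v = splitSide w u + 1`, and the recursion
on `wu` stops at a leaf. Started at the edge `uv` (`v` inner) with the largest `u`-side, whose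
end `v` must then be a cherry, it produces the whole spine.
-/

theorem Set.exists_eq_triple_of_ncard_eq_three {α : Type*} {s : Set α} {x w : α}
    (hs : s.ncard = 3) (hx : x ∈ s) (hw : w ∈ s) (hxw : x ≠ w) :
    ∃ b, b ≠ x ∧ b ≠ w ∧ s = {x, b, w} := by
  have hsub : ({x, w} : Set α) ⊆ s := Set.insert_subset hx (Set.singleton_subset_iff.mpr hw)
  have hdiff : (s \ {x, w}).ncard = 1 := by
    rw [Set.ncard_sdiff hsub, Set.ncard_pair hxw, hs]
  obtain ⟨b, hb⟩ := Set.ncard_eq_one.mp hdiff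
  have hbs : b ∈ s \ {x, w} := hb ▸ rfl
  refine ⟨b, fun h => hbs.2 (Or.inl h), fun h => hbs.2 (Or.inr h), ?_⟩
  rw [← Set.sdiff_union_of_subset hsub, hb]
  ext
  simp only [Set.mem_union, Set.mem_insert_iff, Set.mem_singleton_iff]
  tauto

namespace SimpleGraph

variable {W : Type*} {G : SimpleGraph W} {u v w x : W}

def branch (G : SimpleGraph W) (u v : W) : Set W :=
  {y | (G.deleteEdges {s(u, v)}).Reachable y u}

theorem mem_branch_iff_reachable_deleteEdges_swap :
    x ∈ G.branch v u ↔ (G.deleteEdges {s(u, v)}).Reachable x v := by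
  rw [branch, Sym2.eq_swap]
  rfl

theorem mem_branch_self : u ∈ G.branch u v := Reachable.refl u

theorem Reachable.mem_of_forall_adj {S : Set W} (hS : ∀ ⦃x y⦄, G.Adj x y → x ∈ S → y ∈ S)
    (h : G.Reachable u v) (hu : u ∈ S) : v ∈ S := by
  obtain ⟨p⟩ := h
  induction p with
  | nil => exact hu
  | cons hxy _ ih => exact ih (hS hxy hu)

theorem branch_subset_insert_biUnion :
    G.branch v w ⊆ insert v (⋃ a ∈ G.neighborSet v \ {w}, G.branch a v) := by
  intro y hy
  refine hy.symm.mem_of_forall_adj ?_ (Set.mem_insert v _)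
  intro x z hxz hx
  rw [deleteEdges_adj, Set.mem_singleton_iff] at hxz
  obtain ⟨hxz, hne⟩ := hxz
  rcases hx with rfl | hx
  · refine Or.inr (Set.mem_biUnion ⟨hxz, ?_⟩ mem_branch_self)
    rintro rfl
    exact hne rfl
  · obtain ⟨a, ha, hx⟩ := Set.mem_iUnion₂.mp hx
    by_cases he : s(x, z) = s(a, v)
    · rcases Sym2.eq_iff.mp he with ⟨-, rfl⟩ | ⟨-, rfl⟩
      · exact Set.mem_insert _ _
      · exact Or.inr (Set.mem_biUnion ha mem_branch_self)
    · refine Or.inr (Set.mem_biUnion ha (Reachable.trans (Adj.reachable ?_) hx))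
      simpa [Sym2.eq_swap, hxz.symm] using he

theorem branch_eq_singleton_of_neighborSet_eq (h : G.neighborSet x = {v}) :
    G.branch x v = {x} :=
  (branch_subset_insert_biUnion.trans (by simp [h])).antisymm
    (Set.singleton_subset_iff.mpr mem_branch_self)

theorem Preconnected.mem_branch_or (hG : G.Preconnected) (u v x : W) :
    x ∈ G.branch u v ∨ x ∈ G.branch v u := by
  refine (hG u x).mem_of_forall_adj (S := G.branch u v ∪ G.branch v u) ?_
    (Or.inl mem_branch_self)
  intro y z hyz hy
  by_cases he : s(y, z) = s(u, v)
  · rcases Sym2.eq_iff.mp he with ⟨-, rfl⟩ | ⟨-, rfl⟩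
    · exact Or.inr mem_branch_self
    · exact Or.inl mem_branch_self
  · have hzy : (G.deleteEdges {s(u, v)}).Adj z y := by simpa [Sym2.eq_swap, hyz.symm] using he
    rcases hy with hy | hy
    · exact Or.inl (hzy.reachable.trans hy)
    · rw [mem_branch_iff_reachable_deleteEdges_swap] at hy
      exact Or.inr (mem_branch_iff_reachable_deleteEdges_swap.mpr (hzy.reachable.trans hy))

namespace IsAcyclic

theorem not_reachable_deleteEdges (hG : G.IsAcyclic) (h : G.Adj u v) :
    ¬ (G.deleteEdges {s(u, v)}).Reachable u v :=
  isBridge_iff.mp (isAcyclic_iff_forall_adj_isBridge.mp hG h)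

theorem notMem_branch (hG : G.IsAcyclic) (h : G.Adj u v) : v ∉ G.branch u v :=
  fun hv => hG.not_reachable_deleteEdges h hv.symm

theorem disjoint_branch (hG : G.IsAcyclic) (h : G.Adj u v) :
    Disjoint (G.branch u v) (G.branch v u) := by
  refine Set.disjoint_left.mpr fun y hu hv => hG.not_reachable_deleteEdges h (hu.symm.trans ?_)
  rwa [mem_branch_iff_reachable_deleteEdges_swap] at hv

theorem branch_subset_branch (hG : G.IsAcyclic) (hav : G.Adj u v) (hvw : G.Adj v w) (huw : u ≠ w) :
    G.branch u v ⊆ G.branch v w := by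
  classical
  intro y hy
  obtain ⟨p, hp⟩ := reachable_deleteEdges_iff_exists_walk.mp hy
  refine reachable_deleteEdges_iff_exists_walk.mpr ⟨p.concat hav, ?_⟩
  simp only [Walk.edges_concat, List.concat_eq_append, List.mem_append, List.mem_singleton]
  rintro (he | he)
  · have hv := p.fst_mem_support_of_mem_edges he
    refine hG.not_reachable_deleteEdges hav (Reachable.symm ?_)
    exact reachable_deleteEdges_iff_exists_walk.mpr
      ⟨p.dropUntil v hv, fun h => hp (p.edges_dropUntil_subset_edges hv h)⟩
  · rcases Sym2.eq_iff.mp he with ⟨rfl, rfl⟩ | ⟨-, rfl⟩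
    · exact hvw.ne rfl
    · exact huw rfl

theorem branch_eq_insert_biUnion (hG : G.IsAcyclic) (hvw : G.Adj v w) :
    G.branch v w = insert v (⋃ a ∈ G.neighborSet v \ {w}, G.branch a v) := by
  refine branch_subset_insert_biUnion.antisymm (Set.insert_subset mem_branch_self ?_)
  refine Set.iUnion₂_subset fun a ha => hG.branch_subset_branch ha.1.symm hvw ?_
  rintro rfl
  exact ha.2 rfl

end IsAcyclic

end SimpleGraph

section

variable {T : PhyloTree n V} {u v w x a b : V}

variable (T) in
theorem splitSide_eq_ncard_preimage :
    splitSide T.G T.leaf u v = (T.leaf ⁻¹' T.G.branch u v).ncard := rfl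

theorem splitSide_add_splitSide (h : T.G.Adj u v) :
    splitSide T.G T.leaf u v + splitSide T.G T.leaf v u = n := by
  have hcompl : T.leaf ⁻¹' T.G.branch v u = (T.leaf ⁻¹' T.G.branch u v)ᶜ := by
    ext i
    have hcover := T.isTree.1.preconnected.mem_branch_or u v (T.leaf i)
    have hdisj : T.leaf i ∈ T.G.branch u v → T.leaf i ∉ T.G.branch v u :=
      fun hi => Set.disjoint_left.mp (T.isTree.2.disjoint_branch h) hi
    simp only [Set.mem_preimage, Set.mem_compl_iff]
    tauto
  rw [splitSide_eq_ncard_preimage, splitSide_eq_ncard_preimage, hcompl,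
    Set.ncard_add_ncard_compl, Nat.card_eq_fintype_card, Fintype.card_fin]

theorem IsLeaf.neighborSet_eq (hx : IsLeaf T x) (h : T.G.Adj x v) : T.G.neighborSet x = {v} := by
  obtain ⟨a, ha⟩ := Set.ncard_eq_one.mp hx
  have hv : v ∈ T.G.neighborSet x := h
  rw [ha, Set.mem_singleton_iff] at hv
  rw [ha, hv]

theorem IsLeaf.splitSide_eq_one (hx : IsLeaf T x) (h : T.G.Adj x v) :
    splitSide T.G T.leaf x v = 1 := by
  obtain ⟨i, rfl⟩ := (T.leaf_iff _).mp hx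
  rw [splitSide_eq_ncard_preimage, branch_eq_singleton_of_neighborSet_eq (hx.neighborSet_eq h),
    ← Set.image_singleton, T.leaf_inj.preimage_image, Set.ncard_singleton]

theorem IsBinary.ncard_neighborSet (hT : IsBinary T) (hv : ¬ IsLeaf T v) :
    (T.G.neighborSet v).ncard = 3 :=
  (hT v).resolve_left hv

theorem splitSide_eq_add (hv : ¬ IsLeaf T v) (hN : T.G.neighborSet v = {a, b, w})
    (hab : a ≠ b) (haw : a ≠ w) (hbw : b ≠ w) :
    splitSide T.G T.leaf v w = splitSide T.G T.leaf a v + splitSide T.G T.leaf b v := by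
  have hadj : ∀ z ∈ ({a, b, w} : Set V), T.G.Adj v z := fun z hz => by
    rwa [← hN] at hz
  have hbranch : T.G.branch v w = insert v (T.G.branch a v ∪ T.G.branch b v) := by
    have hdiff : ({a, b, w} : Set V) \ {w} = {a, b} := by
      ext z
      simp only [Set.mem_sdiff, Set.mem_insert_iff, Set.mem_singleton_iff]
      constructor
      · rintro ⟨h | h | h, hne⟩ <;> tauto
      · rintro (rfl | rfl) <;> simp_all
    rw [T.isTree.2.branch_eq_insert_biUnion (hadj w (by simp)), hN, hdiff, Set.biUnion_insert,
      Set.biUnion_singleton]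
  have hdisj : Disjoint (T.G.branch a v) (T.G.branch b v) :=
    (T.isTree.2.disjoint_branch (hadj b (by simp))).mono_left
      (T.isTree.2.branch_subset_branch (hadj a (by simp)).symm (hadj b (by simp)) hab)
  have hpre : T.leaf ⁻¹' T.G.branch v w = T.leaf ⁻¹' (T.G.branch a v ∪ T.G.branch b v) := by
    ext i
    rw [hbranch, Set.mem_preimage, Set.mem_insert_iff, Set.mem_preimage,
      or_iff_right fun h => hv ((T.leaf_iff v).mpr ⟨i, h⟩)]
  rw [splitSide_eq_ncard_preimage, hpre, Set.preimage_union,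
    Set.ncard_union_eq (hdisj.preimage T.leaf)]
  rfl

end

structure IsSpine (T : PhyloTree n V) (c : ℕ → V) (k : ℕ) : Prop where
  isLeaf_zero : IsLeaf T (c 0)
  adj : ∀ i < k, T.G.Adj (c i) (c (i + 1))
  splitSide_eq : ∀ i < k, splitSide T.G T.leaf (c i) (c (i + 1)) = i + 1
  ne : ∀ i, i + 1 < k → c i ≠ c (i + 2)
  neighborSet_eq : ∀ i, i + 1 < k →
    ∃ x, IsLeaf T x ∧ T.G.neighborSet (c (i + 1)) = {c i, x, c (i + 2)}

section

variable {T : PhyloTree n V} {w x y : V} {c : ℕ → V} {k : ℕ}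

namespace IsSpine

theorem extend (hc : IsSpine T c (k + 1)) (hadj : T.G.Adj (c (k + 1)) w)
    (hs : splitSide T.G T.leaf (c (k + 1)) w = k + 2) (hne : c k ≠ w) (hx : IsLeaf T x)
    (hN : T.G.neighborSet (c (k + 1)) = {c k, x, w}) :
    IsSpine T (Function.update c (k + 2) w) (k + 2) := by
  have hc' : ∀ i ≤ k + 1, Function.update c (k + 2) w i = c i := fun i hi =>
    Function.update_of_ne (by omega) _ _
  have hw : Function.update c (k + 2) w (k + 2) = w := Function.update_self _ _ _
  refine ⟨by rw [hc' 0 (by omega)]; exact hc.isLeaf_zero, fun i hi => ?_, fun i hi => ?_,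
    fun i hi => ?_, fun i hi => ?_⟩
  · rcases Nat.lt_succ_iff_lt_or_eq.mp hi with hi | rfl
    · rw [hc' i hi.le, hc' (i + 1) hi]
      exact hc.adj i hi
    · rwa [hc' _ le_rfl, hw]
  · rcases Nat.lt_succ_iff_lt_or_eq.mp hi with hi | rfl
    · rw [hc' i hi.le, hc' (i + 1) hi]
      exact hc.splitSide_eq i hi
    · rwa [hc' _ le_rfl, hw]
  · rcases Nat.lt_succ_iff_lt_or_eq.mp hi with hi | hi
    · rw [hc' i (by omega), hc' (i + 2) hi]
      exact hc.ne i hi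
    · obtain rfl : i = k := by omega
      rwa [hc' _ (by omega), hw]
  · rcases Nat.lt_succ_iff_lt_or_eq.mp hi with hi | hi
    · rw [hc' i (by omega), hc' (i + 1) (by omega), hc' (i + 2) hi]
      exact hc.neighborSet_eq i hi
    · obtain rfl : i = k := by omega
      rw [hc' _ le_rfl, hc' i (by omega), hw]
      exact ⟨x, hx, hN⟩

theorem mem_branch (hc : IsSpine T c k) {i j : ℕ} (hij : i ≤ j) (hj : j < k) :
    c i ∈ T.G.branch (c j) (c (j + 1)) := by
  induction j, hij using Nat.le_induction with
  | base => exact mem_branch_self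
  | succ j hij ih =>
    exact T.isTree.2.branch_subset_branch (hc.adj j (by omega)) (hc.adj (j + 1) hj)
      (hc.ne j hj) (ih (by omega))

theorem injOn_edge (hc : IsSpine T c k) : Set.InjOn (fun i => s(c i, c (i + 1))) (Set.Iio k) := by
  intro i hi j hj he
  rcases Sym2.eq_iff.mp he with ⟨h1, h2⟩ | ⟨h1, h2⟩
  · have hs := hc.splitSide_eq i hi
    rw [h1, h2, hc.splitSide_eq j hj] at hs
    omega
  · exfalso
    rcases le_total i j with hij | hij
    · exact T.isTree.2.notMem_branch (hc.adj j hj) (h1 ▸ hc.mem_branch hij hj)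
    · exact T.isTree.2.notMem_branch (hc.adj i hi) (h2 ▸ hc.mem_branch hij hi)

theorem branch_subset (hc : IsSpine T c k) {j : ℕ} (hj : j < k) :
    T.G.branch (c j) (c (j + 1)) ⊆ {y | IsLeaf T y} ∪ c '' Set.Iic j := by
  induction j with
  | zero =>
    rw [branch_eq_singleton_of_neighborSet_eq (hc.isLeaf_zero.neighborSet_eq (hc.adj 0 hj))]
    exact Set.singleton_subset_iff.mpr (Or.inl hc.isLeaf_zero)
  | succ j ih =>
    obtain ⟨x, hx, hN⟩ := hc.neighborSet_eq j hj
    refine branch_subset_insert_biUnion.trans (Set.insert_subset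
      (Or.inr ⟨j + 1, Set.mem_Iic.mpr le_rfl, rfl⟩) (Set.iUnion₂_subset fun a ha => ?_))
    have hadj : T.G.Adj (c (j + 1)) a := ha.1
    rw [hN] at ha
    rcases ha with ⟨rfl | rfl | rfl, hne⟩
    · exact (ih (by omega)).trans (Set.union_subset_union_right _
        (Set.image_mono (Set.Iic_subset_Iic.mpr (by omega))))
    · rw [branch_eq_singleton_of_neighborSet_eq (hx.neighborSet_eq hadj.symm)]
      exact Set.singleton_subset_iff.mpr (Or.inl hx)
    · exact absurd rfl hne

theorem exists_eq_of_not_isLeaf (hc : IsSpine T c (k + 1)) (hk : IsLeaf T (c (k + 1)))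
    (hy : ¬ IsLeaf T y) : ∃ i, i + 1 < k + 1 ∧ y = c (i + 1) := by
  rcases T.isTree.1.preconnected.mem_branch_or (c k) (c (k + 1)) y with h | h
  · rcases hc.branch_subset (Nat.lt_succ_self k) h with h | ⟨j, hj, rfl⟩
    · exact absurd h hy
    · obtain ⟨i, rfl⟩ : ∃ i, j = i + 1 :=
        Nat.exists_eq_succ_of_ne_zero fun h => hy (h ▸ hc.isLeaf_zero)
      exact ⟨i, by simp only [Set.mem_Iic] at hj; omega, rfl⟩
  · rw [branch_eq_singleton_of_neighborSet_eq (hk.neighborSet_eq (hc.adj k (by omega)).symm)] at h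
    exact absurd (h ▸ hk) hy

theorem splitSizeE_edge (hc : IsSpine T c k) {i : ℕ} (hi : i < k) :
    splitSizeE T s(c i, c (i + 1)) = min (i + 1) (n - (i + 1)) := by
  have hsum := splitSide_add_splitSide (hc.adj i hi)
  rw [hc.splitSide_eq i hi] at hsum
  simp only [splitSizeE, Sym2.lift_mk, hc.splitSide_eq i hi]
  congr 1
  omega

theorem setOf_splitSizeE_eq_image (hc : IsSpine T c (k + 1)) (hk : IsLeaf T (c (k + 1)))
    {P : ℕ → Prop} (hP : ∀ m, P m → 2 ≤ m) :
    {e | e ∈ T.G.edgeSet ∧ P (splitSizeE T e)} =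
      (fun i => s(c i, c (i + 1))) '' {i | i < k + 1 ∧ P (min (i + 1) (n - (i + 1)))} := by
  ext e
  constructor
  · rintro ⟨he, hPe⟩
    induction e using Sym2.ind with | _ u v => ?_
    have h2 := hP _ hPe
    have hinner : ∀ {u v}, T.G.Adj u v → 2 ≤ splitSizeE T s(u, v) → ¬ IsLeaf T u :=
      fun huv h hu => by simp [splitSizeE, hu.splitSide_eq_one huv] at h
    obtain ⟨i, hi, rfl⟩ := hc.exists_eq_of_not_isLeaf hk (hinner he h2)
    obtain ⟨x, hx, hN⟩ := hc.neighborSet_eq i hi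
    have hv : v ∈ T.G.neighborSet (c (i + 1)) := he
    rw [hN] at hv
    rcases hv with rfl | rfl | rfl
    · refine ⟨i, ⟨by omega, ?_⟩, Sym2.eq_swap⟩
      rwa [← hc.splitSizeE_edge (by omega), Sym2.eq_swap]
    · exact absurd hx (hinner he.symm (by rwa [Sym2.eq_swap]))
    · exact ⟨i + 1, ⟨hi, by rwa [← hc.splitSizeE_edge hi]⟩, rfl⟩
  · rintro ⟨i, ⟨hi, hPi⟩, rfl⟩
    exact ⟨hc.adj i hi, by rwa [hc.splitSizeE_edge hi]⟩

end IsSpine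

end

section

variable {T : PhyloTree n V} {u v : V}

variable (T) in
theorem exists_adj_not_isLeaf (hn : 3 ≤ n) :
    ∃ u v, T.G.Adj u v ∧ ¬ IsLeaf T v := by
  obtain ⟨u, hu⟩ : ∃ u, IsLeaf T u := ⟨T.leaf ⟨0, by omega⟩, (T.leaf_iff _).mpr ⟨_, rfl⟩⟩
  obtain ⟨v, huv⟩ : ∃ v, T.G.Adj u v :=
    Set.nonempty_of_ncard_ne_zero (s := T.G.neighborSet u) (by rw [hu]; simp)
  refine ⟨u, v, huv, fun hv => ?_⟩
  have := splitSide_add_splitSide huv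
  rw [hu.splitSide_eq_one huv, hv.splitSide_eq_one huv.symm] at this
  omega

namespace IsCaterpillar

theorem exists_isSpine_of_adj (hT : IsCaterpillar T) (huv : T.G.Adj u v) (hv : ¬ IsLeaf T v) :
    ∃ c k, IsSpine T c (k + 1) ∧ c k = u ∧ c (k + 1) = v ∧
      splitSide T.G T.leaf u v = k + 1 := by
  induction hm : (T.G.branch u v).ncard using Nat.strong_induction_on generalizing u v with
  | _ m ih => ?_
  by_cases hu : IsLeaf T u
  · have hs := hu.splitSide_eq_one huv
    refine ⟨fun i => if i = 0 then u else v, 0, ⟨by simpa, fun i hi => ?_, fun i hi => ?_,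
      fun i hi => by omega, fun i hi => by omega⟩, rfl, rfl, hs⟩
    · obtain rfl : i = 0 := by omega
      simpa using huv
    · obtain rfl : i = 0 := by omega
      simpa using hs
  · obtain ⟨x, hux, hx⟩ := hT.2 u hu
    obtain ⟨w, hwx, hwv, hN⟩ := Set.exists_eq_triple_of_ncard_eq_three
      (hT.1.ncard_neighborSet hu) hux huv fun h => hv (h ▸ hx)
    have huw : T.G.Adj u w := by rw [← mem_neighborSet, hN]; simp
    have hlt : (T.G.branch w u).ncard < m := hm ▸ Set.ncard_lt_ncard
      ⟨T.isTree.2.branch_subset_branch huw.symm huv hwv,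
        fun h => T.isTree.2.notMem_branch huw.symm (h mem_branch_self)⟩
    obtain ⟨c, k, hc, hcw, hcu, hk⟩ := ih _ hlt huw.symm hu rfl
    have hs : splitSide T.G T.leaf u v = k + 2 := by
      rw [splitSide_eq_add hu hN hwx.symm (fun h => hv (h ▸ hx)) hwv,
        hx.splitSide_eq_one hux.symm, hk]
      omega
    refine ⟨Function.update c (k + 2) v, k + 1, hc.extend (hcu ▸ huv) (hcu ▸ hs) (hcw ▸ hwv) hx
      (by rw [hcu, hcw, hN, Set.insert_comm]), ?_, Function.update_self .., hs⟩
    rw [Function.update_of_ne (by omega), hcu]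

theorem one_le_splitSide (hT : IsCaterpillar T) (huv : T.G.Adj u v) (hv : ¬ IsLeaf T v) :
    1 ≤ splitSide T.G T.leaf u v := by
  obtain ⟨-, k, -, -, -, hk⟩ := hT.exists_isSpine_of_adj huv hv
  omega

theorem exists_cherry (hT : IsCaterpillar T) (hn : 3 ≤ n) :
    ∃ u v a b, T.G.Adj u v ∧ ¬ IsLeaf T v ∧ IsLeaf T a ∧ IsLeaf T b ∧ a ≠ b ∧ a ≠ u ∧ b ≠ u ∧
      T.G.neighborSet v = {a, b, u} := by
  classical
  obtain ⟨l, p, hlp, hp⟩ := exists_adj_not_isLeaf T hn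
  obtain ⟨⟨u, v⟩, huv, hmax⟩ :=
    (Finset.univ.filter fun e : V × V => T.G.Adj e.1 e.2 ∧ ¬ IsLeaf T e.2).exists_max_image
      (fun e => splitSide T.G T.leaf e.1 e.2) ⟨(l, p), by simpa [hp] using hlp⟩
  simp only [Finset.mem_filter, Finset.mem_univ, true_and, and_imp, Prod.forall] at huv hmax
  obtain ⟨huv, hv⟩ := huv
  have hleaf : ∀ a b, T.G.neighborSet v = {a, b, u} → a ≠ b → a ≠ u → b ≠ u → IsLeaf T a := by
    intro a b hN hab hau hbu
    by_contra ha
    have hadj : ∀ z ∈ ({a, b, u} : Set V), T.G.Adj v z := fun z hz => by rwa [← hN] at hz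
    have hgrow := splitSide_eq_add hv (by rw [hN, Set.insert_comm, Set.pair_comm, Set.insert_comm])
      hbu.symm hau.symm hab.symm
    have := hT.one_le_splitSide (hadj b (by simp)).symm hv
    have := hmax v a (hadj a (by simp)) ha
    omega
  obtain ⟨a, ha, hau⟩ := Set.exists_ne_of_one_lt_ncard
    (by rw [hT.1.ncard_neighborSet hv]; omega) u
  obtain ⟨b, hba, hbu, hN⟩ := Set.exists_eq_triple_of_ncard_eq_three
    (hT.1.ncard_neighborSet hv) ha huv.symm hau
  exact ⟨u, v, a, b, huv, hv, hleaf a b hN hba.symm hau hbu,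
    hleaf b a (by rw [hN, Set.insert_comm]) hba hbu hau, hba.symm, hau, hbu, hN⟩

theorem exists_isSpine (hT : IsCaterpillar T) (hn : 3 ≤ n) :
    ∃ c, IsSpine T c (n - 1) ∧ IsLeaf T (c (n - 1)) := by
  obtain ⟨u, v, a, b, huv, hv, hLa, hLb, hab, hau, hbu, hN⟩ := hT.exists_cherry hn
  have hva : T.G.Adj v a := by rw [← mem_neighborSet, hN]; simp
  have hvb : T.G.Adj v b := by rw [← mem_neighborSet, hN]; simp
  have hvu := splitSide_eq_add hv hN hab hau hbu
  rw [hLa.splitSide_eq_one hva.symm, hLb.splitSide_eq_one hvb.symm] at hvu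
  have huv' := splitSide_add_splitSide huv
  have hvb' := splitSide_add_splitSide hvb
  rw [hLb.splitSide_eq_one hvb.symm] at hvb'
  obtain ⟨c, k, hc, hcu, hcv, hk⟩ := hT.exists_isSpine_of_adj huv hv
  have hnk : n - 1 = k + 2 := by omega
  refine ⟨Function.update c (k + 2) b, hnk ▸ hc.extend (hcv ▸ hvb) (by rw [hcv]; omega)
    (hcu ▸ hbu.symm) hLa (by rw [hcu, hcv, hN, Set.pair_comm b u, Set.insert_comm a u]),
    by rwa [hnk, Function.update_self]⟩

end IsCaterpillar

theorem card_filter_range_min_le {n j : ℕ} (hj : 2 ≤ j) (hjn : j ≤ n / 2) :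
    ((Finset.range (n - 1)).filter fun i =>
      2 ≤ min (i + 1) (n - (i + 1)) ∧ min (i + 1) (n - (i + 1)) ≤ j).card =
      min (2 * j - 2) (n - 3) := by
  have hsplit : ((Finset.range (n - 1)).filter fun i =>
      2 ≤ min (i + 1) (n - (i + 1)) ∧ min (i + 1) (n - (i + 1)) ≤ j) =
      Finset.Ico 1 j ∪ Finset.Ico (max j (n - 1 - j)) (n - 2) := by
    ext i
    simp only [Finset.mem_filter, Finset.mem_range, Finset.mem_union, Finset.mem_Ico]
    omega
  rw [hsplit, Finset.card_union_of_disjoint (Finset.disjoint_left.mpr fun i h1 h2 => by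
    simp only [Finset.mem_Ico] at h1 h2; omega), Nat.card_Ico, Nat.card_Ico]
  omega

end

section

variable {T : PhyloTree n V} {i j : ℕ}

theorem IsCaterpillar.mseq_eq (hT : IsCaterpillar T) (hj : 2 ≤ j) (hjn : j ≤ n / 2) :
    mseq T j = min (2 * j - 2) (n - 3) := by
  obtain ⟨c, hc, hleaf⟩ := hT.exists_isSpine (by omega)
  obtain ⟨k, hk⟩ : ∃ k, n - 1 = k + 1 := ⟨n - 2, by omega⟩
  rw [hk] at hc hleaf
  rw [mseq, hc.setOf_splitSizeE_eq_image hleaf (P := fun m => 2 ≤ m ∧ m ≤ j) fun _ hm => hm.1,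
    (hc.injOn_edge.mono fun _ hi => hi.1).ncard_image, ← card_filter_range_min_le hj hjn, hk,
    ← Set.ncard_coe_finset]
  congr 1
  ext i
  simp

variable (T) in
theorem mseq_eq_zero_of_le_one (hj : j ≤ 1) : mseq T j = 0 := by
  rw [mseq, Set.ncard_eq_zero]
  exact Set.eq_empty_of_forall_notMem fun e he => by have := he.2; omega

theorem sseq_eq_of_mseq_eq (hm : ∀ j, 2 ≤ j → j ≤ n / 2 → mseq T j = min (2 * j - 2) (n - 3))
    (hi : 1 ≤ i) (hin : i ≤ n - 3) : sseq T i = (i + 3) / 2 := by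
  have hmem : i ≤ mseq T ((i + 3) / 2) := by
    rw [hm _ (by omega) (by omega)]
    omega
  refine le_antisymm (Nat.sInf_le hmem) (le_csInf ⟨_, hmem⟩ fun j (hj : i ≤ mseq T j) => ?_)
  by_contra! hlt
  rcases le_or_gt j 1 with hj1 | hj1
  · rw [mseq_eq_zero_of_le_one T hj1] at hj
    omega
  · rw [hm j hj1 (by omega)] at hj
    omega

end

theorem stmt_4_general {n : ℕ} {V : Type} [Fintype V]
    (Tc : PhyloTree n V) (hTc : IsCaterpillar Tc) :
    (∀ i, 1 ≤ i → i ≤ n - 3 → sseq Tc i = (i + 3) / 2) ∧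
    (∀ j, 2 ≤ j → j ≤ n / 2 → mseq Tc j = min (2 * j - 2) (n - 3)) := by
  have hm : ∀ j, 2 ≤ j → j ≤ n / 2 → mseq Tc j = min (2 * j - 2) (n - 3) :=
    fun _ hj hjn => hTc.mseq_eq hj hjn
  exact ⟨fun _ hi hin => sseq_eq_of_mseq_eq hm hi hin, hm⟩

/-- The split size sequence of a caterpillar: `s(τ_c)_i = ⌊(i+3)/2⌋` and
`m(τ_c)_j = min(2j-2, n-3)`. -/
theorem stmt_4 {n : ℕ} (hn : 4 ≤ n) {V : Type} [Fintype V]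
    (Tc : PhyloTree n V) (hTc : IsCaterpillar Tc) :
    (∀ i, 1 ≤ i → i ≤ n - 3 → sseq Tc i = (i + 3) / 2) ∧
    (∀ j, 2 ≤ j → j ≤ n / 2 → mseq Tc j = min (2 * j - 2) (n - 3)) :=
  stmt_4_general Tc hTc
end

section
/- There is no binary phylogenetic tree on 8 leaves whose split size sequence equals (2,2,2,2,3); that is, (2,2,2,2,3) ∉ S_8. -/
open SimpleGraph

variable {n : ℕ} {V : Type} [Fintype V]

/-!
A split of size 2 cuts off a cherry, and in a binary tree distinct cherries are disjoint, so
four of them partition the eight leaves. Splits of a tree are pairwise compatible, hence the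
three-leaf side of a split of size 3 would be a union of cherries and have even size.
-/

lemma Set.even_ncard_of_forall_subset_or_disjoint {ι α : Type*} {I : Set ι} {P : ι → Set α}
    {A : Set α} (hI : I.Finite) (hP : ∀ i ∈ I, (P i).Finite) (hdisj : I.PairwiseDisjoint P)
    (heven : ∀ i ∈ I, Even (P i).ncard) (hA : A ⊆ ⋃ i ∈ I, P i)
    (hsplit : ∀ i ∈ I, P i ⊆ A ∨ Disjoint (P i) A) : Even A.ncard := by
  have hAJ : A = ⋃ i ∈ {i ∈ I | P i ⊆ A}, P i := by
    refine subset_antisymm (fun x hx => ?_) (Set.iUnion₂_subset fun i hi => hi.2)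
    obtain ⟨i, hi, hxi⟩ := Set.mem_iUnion₂.mp (hA hx)
    have hiA := (hsplit i hi).resolve_right (Set.not_disjoint_iff.mpr ⟨x, hxi, hx⟩)
    exact Set.mem_biUnion ⟨hi, hiA⟩ hxi
  rw [hAJ, (hI.subset (Set.sep_subset I _)).ncard_biUnion (fun i hi => hP i hi.1)
    (hdisj.subset (Set.sep_subset I _))]
  exact finsum_mem_induction _ Even.zero (fun _ _ => Even.add) fun i hi => heven i hi.1

namespace SimpleGraph

variable {V : Type*} {G : SimpleGraph V} {a c d u v x y z : V}

def side (G : SimpleGraph V) (u v : V) : Set V :=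
  {x | (G.deleteEdges {s(u, v)}).Reachable x u}

lemma mem_side_self : u ∈ G.side u v := Reachable.refl u

lemma mem_side_swap : x ∈ G.side v u ↔ (G.deleteEdges {s(u, v)}).Reachable x v := by
  rw [side, Sym2.eq_swap]; rfl

lemma IsAcyclic.notMem_side (hG : G.IsAcyclic) (h : G.Adj u v) : v ∉ G.side u v :=
  fun hv => isBridge_iff.mp (isAcyclic_iff_forall_adj_isBridge.mp hG h) hv.symm

lemma IsAcyclic.disjoint_side (hG : G.IsAcyclic) (h : G.Adj u v) :
    Disjoint (G.side u v) (G.side v u) :=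
  Set.disjoint_left.mpr fun _ hu hv => hG.notMem_side h ((mem_side_swap.mp hv).symm.trans hu)

lemma Preconnected.mem_side_union_side (hG : G.Preconnected) (u v x : V) :
    x ∈ G.side u v ∪ G.side v u := by
  suffices h : ∀ {x y : V}, G.Walk x y → y ∈ G.side u v ∪ G.side v u →
      x ∈ G.side u v ∪ G.side v u from h (hG x u).some (Or.inl mem_side_self)
  intro x y W hy
  induction W with
  | nil => exact hy
  | @cons x y _ hxy _ ih =>
    by_cases he : s(x, y) = s(u, v)
    · rcases Sym2.eq_iff.mp he with ⟨rfl, -⟩ | ⟨rfl, -⟩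
      · exact Or.inl mem_side_self
      · exact Or.inr mem_side_self
    · have hxy' : (G.deleteEdges {s(u, v)}).Adj x y := by simpa [deleteEdges_adj, hxy] using he
      exact (ih hy).imp hxy'.reachable.trans
        fun h => mem_side_swap.mpr (hxy'.reachable.trans (mem_side_swap.mp h))

/-- A walk to `y` inside `G.side y z` never meets `u`, so it avoids every edge at `u`. -/
lemma reachable_deleteEdges_of_mem_side (hx : x ∈ G.side y z) (hu : u ∉ G.side y z) (v : V) :
    (G.deleteEdges {s(u, v)}).Reachable x y := by
  classical
  obtain ⟨W⟩ := hx
  refine ⟨W.transfer _ fun e he => ?_⟩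
  have he' := W.edges_subset_edgeSet he
  rw [edgeSet_deleteEdges] at he' ⊢
  refine ⟨he'.1, fun heq => hu ?_⟩
  rw [Set.mem_singleton_iff] at heq
  subst heq
  exact ⟨W.dropUntil u (W.fst_mem_support_of_mem_edges he)⟩

lemma IsAcyclic.side_subset_side (hG : G.IsAcyclic) (hac : G.Adj a c) (hcu : c ≠ u) :
    G.side c a ⊆ G.side a u := by
  intro x hx
  have hca : (G.deleteEdges {s(a, u)}).Adj c a := by
    simp [deleteEdges_adj, hac.symm, hcu, hac.ne.symm]
  exact (reachable_deleteEdges_of_mem_side hx (hG.notMem_side hac.symm) u).trans hca.reachable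

lemma IsAcyclic.disjoint_side_side (hG : G.IsAcyclic) (hac : G.Adj a c) (had : G.Adj a d)
    (hcd : c ≠ d) : Disjoint (G.side c a) (G.side d a) :=
  (hG.disjoint_side had.symm).symm.mono_left (hG.side_subset_side hac hcd)

lemma IsTree.side_subset_or_of_mem_side (hG : G.IsTree) (hxy : G.Adj x y) (hu : u ∈ G.side x y)
    (v : V) : G.side y x ⊆ G.side u v ∨ G.side y x ⊆ G.side v u := by
  have hu' : u ∉ G.side y x := Set.disjoint_left.mp (hG.isAcyclic.disjoint_side hxy) hu
  have hreach : ∀ w ∈ G.side y x, (G.deleteEdges {s(u, v)}).Reachable w y :=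
    fun w hw => reachable_deleteEdges_of_mem_side hw hu' v
  rcases hG.1.preconnected.mem_side_union_side u v y with hy | hy
  · exact Or.inl fun w hw => (hreach w hw).trans hy
  · exact Or.inr fun w hw => mem_side_swap.mpr ((hreach w hw).trans (mem_side_swap.mp hy))

lemma IsTree.side_subset_or (hG : G.IsTree) (hxy : G.Adj x y) (u v : V) :
    G.side x y ⊆ G.side u v ∨ G.side x y ⊆ G.side v u ∨
      G.side y x ⊆ G.side u v ∨ G.side y x ⊆ G.side v u := by
  rcases hG.1.preconnected.mem_side_union_side x y u with hu | hu
  · exact Or.inr (Or.inr (hG.side_subset_or_of_mem_side hxy hu v))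
  · exact (hG.side_subset_or_of_mem_side hxy.symm hu v).elim Or.inl (Or.inr ∘ Or.inl)

lemma side_eq_singleton (h : G.neighborSet u = {v}) : G.side u v = {u} := by
  refine Set.eq_singleton_iff_unique_mem.mpr ⟨mem_side_self, fun x ⟨W⟩ => ?_⟩
  cases W.reverse with
  | nil => rfl
  | cons hua _ =>
    rw [deleteEdges_adj] at hua
    have ha : _ ∈ G.neighborSet u := hua.1
    rw [h, Set.mem_singleton_iff] at ha
    exact absurd (by rw [ha]; exact Set.mem_singleton _) hua.2

end SimpleGraph

namespace PhyloTree

variable (T : PhyloTree n V) {a u v x y : V}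

def sideLeaves (u v : V) : Set (Fin n) := T.leaf ⁻¹' T.G.side u v

lemma splitSizeE_mk (u v : V) :
    splitSizeE T s(u, v) = min (T.sideLeaves u v).ncard (T.sideLeaves v u).ncard := rfl

lemma sideLeaves_swap (h : T.G.Adj u v) : T.sideLeaves v u = (T.sideLeaves u v)ᶜ := by
  ext i
  have hcover := T.isTree.1.preconnected.mem_side_union_side u v (T.leaf i)
  have hdisj : T.leaf i ∈ T.G.side u v → T.leaf i ∉ T.G.side v u :=
    fun hi => Set.disjoint_left.mp (T.isTree.isAcyclic.disjoint_side h) hi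
  simp only [sideLeaves, Set.mem_preimage, Set.mem_compl_iff, Set.mem_union] at hcover ⊢
  tauto

lemma ncard_sideLeaves_add (h : T.G.Adj u v) :
    (T.sideLeaves u v).ncard + (T.sideLeaves v u).ncard = n := by
  rw [T.sideLeaves_swap h, Set.ncard_add_ncard_compl, Nat.card_eq_fintype_card, Fintype.card_fin]

lemma sideLeaves_nonempty (h : T.G.Adj u v) : (T.sideLeaves u v).Nonempty := by
  induction hs : (T.G.side u v).ncard using Nat.strong_induction_on generalizing u v with
  | _ N ih =>
    by_cases hu : IsLeaf T u
    · obtain ⟨i, rfl⟩ := (T.leaf_iff u).mp hu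
      exact ⟨i, SimpleGraph.mem_side_self⟩
    · obtain ⟨w, huw, hwv⟩ : ∃ w ∈ T.G.neighborSet u, w ≠ v := by
        by_contra! hN
        exact hu (Set.ncard_eq_one.mpr ⟨v, Set.eq_singleton_iff_unique_mem.mpr ⟨h, hN⟩⟩)
      have hsub := T.isTree.isAcyclic.side_subset_side huw hwv
      have hlt : (T.G.side w u).ncard < N := hs ▸ Set.ncard_lt_ncard
        (ssubset_of_subset_not_subset hsub fun h' =>
          T.isTree.isAcyclic.notMem_side huw.symm (h' SimpleGraph.mem_side_self))
      obtain ⟨i, hi⟩ := ih _ hlt huw.symm rfl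
      exact ⟨i, hsub hi⟩

lemma sideLeaves_subset_or (hxy : T.G.Adj x y) (u v : V) :
    T.sideLeaves x y ⊆ T.sideLeaves u v ∨ T.sideLeaves x y ⊆ T.sideLeaves v u ∨
      T.sideLeaves y x ⊆ T.sideLeaves u v ∨ T.sideLeaves y x ⊆ T.sideLeaves v u :=
  (T.isTree.side_subset_or hxy u v).imp Set.preimage_mono <|
    Or.imp Set.preimage_mono <| Or.imp Set.preimage_mono Set.preimage_mono

lemma subset_or_subset_or_disjoint_sideLeaves (hxy : T.G.Adj x y) (huv : T.G.Adj u v)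
    (hn : (T.sideLeaves x y).ncard + (T.sideLeaves u v).ncard < n) :
    T.sideLeaves x y ⊆ T.sideLeaves u v ∨ T.sideLeaves u v ⊆ T.sideLeaves x y ∨
      Disjoint (T.sideLeaves x y) (T.sideLeaves u v) := by
  rcases T.sideLeaves_subset_or hxy u v with h | h | h | h
  · exact Or.inl h
  · rw [T.sideLeaves_swap huv] at h
    exact Or.inr (Or.inr (Set.subset_compl_iff_disjoint_right.mp h))
  · have := Set.ncard_le_ncard h
    have := T.ncard_sideLeaves_add hxy
    omega
  · rw [T.sideLeaves_swap huv, T.sideLeaves_swap hxy] at h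
    exact Or.inr (Or.inl (Set.compl_subset_compl.mp h))

lemma not_isLeaf_of_one_lt_ncard_sideLeaves (h : T.G.Adj u v)
    (h1 : 1 < (T.sideLeaves u v).ncard) : ¬ IsLeaf T u := by
  intro hu
  obtain ⟨w, hw⟩ := Set.ncard_eq_one.mp hu
  have hwv : v = w := by
    rw [← Set.mem_singleton_iff, ← hw]
    exact h
  have hsub : (T.sideLeaves u v).Subsingleton := by
    rw [sideLeaves, SimpleGraph.side_eq_singleton (hwv ▸ hw)]
    exact Set.subsingleton_singleton.preimage T.leaf_inj
  exact h1.not_ge (Set.ncard_le_one_iff_subsingleton.mpr hsub)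

lemma two_le_ncard_sideLeaves (hT : IsBinary T) (ha : ¬ IsLeaf T a) (u : V) :
    2 ≤ (T.sideLeaves a u).ncard := by
  have h3 : (T.G.neighborSet a).ncard = 3 := (hT a).resolve_left ha
  have h2 : 1 < (T.G.neighborSet a \ {u}).ncard := by
    have := Set.le_ncard_sdiff {u} (T.G.neighborSet a)
    rw [h3, Set.ncard_singleton] at this
    omega
  obtain ⟨p, q, ⟨hap, hpu⟩, ⟨haq, hqu⟩, hpq⟩ := (Set.one_lt_ncard_iff).mp h2
  obtain ⟨i, hi⟩ := T.sideLeaves_nonempty hap.symm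
  obtain ⟨j, hj⟩ := T.sideLeaves_nonempty haq.symm
  have hij : i ≠ j := by
    rintro rfl
    exact Set.disjoint_left.mp (T.isTree.isAcyclic.disjoint_side_side hap haq hpq) hi hj
  have hsub : ({i, j} : Set (Fin n)) ⊆ T.sideLeaves a u := by
    rintro k (rfl | rfl)
    · exact T.isTree.isAcyclic.side_subset_side hap hpu hi
    · exact T.isTree.isAcyclic.side_subset_side haq hqu hj
  exact (Set.ncard_pair hij).symm.le.trans (Set.ncard_le_ncard hsub)

lemma adj_leaf_of_mem_sideLeaves (hT : IsBinary T) (h : T.G.Adj u v)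
    (h2 : (T.sideLeaves u v).ncard = 2) {k : Fin n} (hk : k ∈ T.sideLeaves u v) :
    T.G.Adj u (T.leaf k) := by
  have hu : ¬ IsLeaf T u := T.not_isLeaf_of_one_lt_ncard_sideLeaves h (by omega)
  have h3 : (T.G.neighborSet u).ncard = 3 := (hT u).resolve_left hu
  obtain ⟨a, b, hab, hnbr⟩ : ∃ a b, a ≠ b ∧ T.G.neighborSet u \ {v} = {a, b} := by
    rw [← Set.ncard_eq_two, Set.ncard_sdiff_singleton_of_mem (T.G.mem_neighborSet u v |>.mpr h),
      h3]
  have ha : a ∈ T.G.neighborSet u \ {v} := hnbr ▸ Set.mem_insert a {b}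
  have hb : b ∈ T.G.neighborSet u \ {v} := hnbr ▸ Set.mem_insert_of_mem a rfl
  have hAsub : T.sideLeaves a u ⊆ T.sideLeaves u v :=
    Set.preimage_mono (T.isTree.isAcyclic.side_subset_side ha.1 ha.2)
  have hBsub : T.sideLeaves b u ⊆ T.sideLeaves u v :=
    Set.preimage_mono (T.isTree.isAcyclic.side_subset_side hb.1 hb.2)
  have hdisj : Disjoint (T.sideLeaves a u) (T.sideLeaves b u) :=
    (T.isTree.isAcyclic.disjoint_side_side ha.1 hb.1 hab).preimage T.leaf
  have hsum : (T.sideLeaves a u).ncard + (T.sideLeaves b u).ncard ≤ 2 := by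
    rw [← Set.ncard_union_eq hdisj, ← h2]
    exact Set.ncard_le_ncard (Set.union_subset hAsub hBsub)
  have hApos := (Set.ncard_pos).mpr (T.sideLeaves_nonempty ha.1.symm)
  have hBpos := (Set.ncard_pos).mpr (T.sideLeaves_nonempty hb.1.symm)
  -- both branches carry a single leaf, so `a` and `b` are themselves leaves
  obtain ⟨i, rfl⟩ := (T.leaf_iff a).mp
    (not_not.mp fun ha' => (T.two_le_ncard_sideLeaves hT ha' u).not_gt (by omega))
  obtain ⟨j, rfl⟩ := (T.leaf_iff b).mp
    (not_not.mp fun hb' => (T.two_le_ncard_sideLeaves hT hb' u).not_gt (by omega))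
  have hij : i ≠ j := fun hij => hab (hij ▸ rfl)
  have hpair : ({i, j} : Set (Fin n)) = T.sideLeaves u v := by
    refine Set.eq_of_subset_of_ncard_le ?_ (by rw [h2, Set.ncard_pair hij])
    rintro k (rfl | rfl)
    · exact hAsub SimpleGraph.mem_side_self
    · exact hBsub SimpleGraph.mem_side_self
  rcases hpair ▸ hk with rfl | rfl
  · exact ha.1
  · exact hb.1

lemma eq_of_sideLeaves_eq (hT : IsBinary T) (huv : T.G.Adj u v) (hxy : T.G.Adj x y)
    (h2 : (T.sideLeaves u v).ncard = 2) (heq : T.sideLeaves u v = T.sideLeaves x y) :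
    u = x ∧ v = y := by
  obtain ⟨k, hk⟩ := Set.nonempty_of_ncard_ne_zero (h2 ▸ two_ne_zero)
  have hku := T.adj_leaf_of_mem_sideLeaves hT huv h2 hk
  have hkx := T.adj_leaf_of_mem_sideLeaves hT hxy (heq ▸ h2) (heq ▸ hk)
  obtain ⟨w, hw⟩ := Set.ncard_eq_one.mp ((T.leaf_iff (T.leaf k)).mpr ⟨k, rfl⟩)
  have hux : u = x := by
    have hu : u ∈ T.G.neighborSet (T.leaf k) := hku.symm
    have hx : x ∈ T.G.neighborSet (T.leaf k) := hkx.symm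
    rw [hw] at hu hx
    exact hu.trans hx.symm
  subst hux
  refine ⟨rfl, by_contra fun hvy => ?_⟩
  -- otherwise the branch at `y` would lie on both sides of the edge `{u, y}`
  have hsub : T.sideLeaves y u ⊆ T.sideLeaves u y :=
    heq ▸ Set.preimage_mono (T.isTree.isAcyclic.side_subset_side hxy (Ne.symm hvy))
  obtain ⟨i, hi⟩ := T.sideLeaves_nonempty hxy.symm
  exact (T.sideLeaves_swap hxy ▸ hi) (hsub hi)

lemma disjoint_sideLeaves_of_ncard_eq_two (hT : IsBinary T) (hn : 4 < n)
    (huv : T.G.Adj u v) (hxy : T.G.Adj x y) (h2uv : (T.sideLeaves u v).ncard = 2)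
    (h2xy : (T.sideLeaves x y).ncard = 2) (hne : (u, v) ≠ (x, y)) :
    Disjoint (T.sideLeaves u v) (T.sideLeaves x y) := by
  have hne' : T.sideLeaves u v ≠ T.sideLeaves x y := fun heq =>
    hne (Prod.ext_iff.mpr (T.eq_of_sideLeaves_eq hT huv hxy h2uv heq))
  rcases T.subset_or_subset_or_disjoint_sideLeaves huv hxy (by omega) with h | h | h
  · exact absurd (Set.eq_of_subset_of_ncard_le h (by omega)) hne'
  · exact absurd (Set.eq_of_subset_of_ncard_le h (by omega)).symm hne'
  · exact h

lemma exists_adj_ncard_sideLeaves_eq {e : Sym2 V} (he : e ∈ T.G.edgeSet) :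
    ∃ u v, e = s(u, v) ∧ T.G.Adj u v ∧ (T.sideLeaves u v).ncard = splitSizeE T e := by
  induction e using Sym2.ind with
  | _ u v =>
    rcases min_choice (T.sideLeaves u v).ncard (T.sideLeaves v u).ncard with h | h
    · exact ⟨u, v, rfl, he, by rw [splitSizeE_mk, h]⟩
    · exact ⟨v, u, Sym2.eq_swap, T.G.adj_symm he, by rw [splitSizeE_mk, h]⟩

def cherryDarts : Set (V × V) := {p | T.G.Adj p.1 p.2 ∧ (T.sideLeaves p.1 p.2).ncard = 2}

lemma numCherries_le_ncard_cherryDarts : numCherries T ≤ T.cherryDarts.ncard := by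
  calc numCherries T ≤ ((fun p => s(p.1, p.2)) '' T.cherryDarts).ncard := by
        refine Set.ncard_le_ncard ?_ (Set.toFinite _)
        rintro e ⟨he, h2⟩
        obtain ⟨u, v, rfl, huv, huv2⟩ := T.exists_adj_ncard_sideLeaves_eq he
        exact ⟨(u, v), ⟨huv, huv2.trans h2⟩, rfl⟩
    _ ≤ T.cherryDarts.ncard := Set.ncard_image_le (Set.toFinite _)

lemma pairwiseDisjoint_cherryDarts (hT : IsBinary T) (hn : 4 < n) :
    T.cherryDarts.PairwiseDisjoint fun p => T.sideLeaves p.1 p.2 :=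
  fun _ hp _ hq hpq => T.disjoint_sideLeaves_of_ncard_eq_two hT hn hp.1 hq.1 hp.2 hq.2 hpq

lemma biUnion_cherryDarts_eq_univ (hT : IsBinary T) (hn : 4 < n)
    (hc : n ≤ 2 * numCherries T) : ⋃ p ∈ T.cherryDarts, T.sideLeaves p.1 p.2 = Set.univ := by
  refine Set.eq_of_subset_of_ncard_le (Set.subset_univ _) ?_ (Set.toFinite _)
  have hsum :
      ∑ᶠ p ∈ T.cherryDarts, (T.sideLeaves p.1 p.2).ncard = 2 * T.cherryDarts.ncard := by
    rw [← finsum_one, mul_finsum_mem' _ _ (Set.toFinite _)]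
    exact finsum_mem_congr rfl fun p hp => hp.2
  rw [(Set.toFinite _).ncard_biUnion (fun _ _ => Set.toFinite _)
    (T.pairwiseDisjoint_cherryDarts hT hn), hsum, Set.ncard_univ, Nat.card_eq_fintype_card,
    Fintype.card_fin]
  have := T.numCherries_le_ncard_cherryDarts
  omega

/-- When the cherries cover all leaves, every other split is a union of cherries. -/
lemma even_ncard_sideLeaves (hT : IsBinary T) (hc : n ≤ 2 * numCherries T)
    (huv : T.G.Adj u v) (h2 : 2 ≤ (T.sideLeaves u v).ncard)
    (hn : (T.sideLeaves u v).ncard + 2 < n) : Even (T.sideLeaves u v).ncard := by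
  refine Set.even_ncard_of_forall_subset_or_disjoint (Set.toFinite _) (fun _ _ => Set.toFinite _)
    (T.pairwiseDisjoint_cherryDarts hT (by omega)) (fun p hp => hp.2 ▸ even_two)
    ((T.biUnion_cherryDarts_eq_univ hT (by omega) hc).symm ▸ Set.subset_univ _)
    fun p hp => ?_
  have hp2 : (T.sideLeaves p.1 p.2).ncard = 2 := hp.2
  rcases T.subset_or_subset_or_disjoint_sideLeaves hp.1 huv (by omega) with h | h | h
  · exact Or.inl h
  · exact Or.inl (Set.eq_of_subset_of_ncard_le h (by omega)).ge
  · exact Or.inr h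

end PhyloTree

lemma le_mseq_of_sseq_eq {T : PhyloTree n V} {i j : ℕ} (h : sseq T i = j) (hj : j ≠ 0) :
    i ≤ mseq T j := by
  have hne : {j | i ≤ mseq T j}.Nonempty :=
    Set.nonempty_iff_ne_empty.mpr fun he => hj (by rw [← h, sseq, he, Nat.sInf_empty])
  exact h ▸ Nat.sInf_mem hne

lemma mseq_lt_of_lt_sseq {T : PhyloTree n V} {i j : ℕ} (h : j < sseq T i) : mseq T j < i :=
  not_le.mp (Nat.notMem_of_lt_sInf (s := {j | i ≤ mseq T j}) h)

lemma exists_splitSizeE_eq_of_mseq_lt {T : PhyloTree n V} {j : ℕ}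
    (h : mseq T j < mseq T (j + 1)) : ∃ e ∈ T.G.edgeSet, splitSizeE T e = j + 1 := by
  by_contra! hne
  refine h.not_ge (Set.ncard_le_ncard (fun e ⟨he, h2, hle⟩ => ⟨he, h2, ?_⟩))
  exact Nat.le_of_lt_succ (hle.lt_of_ne (hne e he))

lemma mseq_two_eq_numCherries (T : PhyloTree n V) : mseq T 2 = numCherries T := by
  unfold mseq numCherries
  congr 1
  ext e
  exact and_congr_right fun _ => and_comm.trans le_antisymm_iff.symm

/-- `(2,2,2,2,3) ∉ S_8`: no binary phylogenetic tree on 8 leaves has this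
split size sequence. -/
theorem stmt_9 :
    ¬ ∃ (V : Type) (_ : Fintype V) (T : PhyloTree 8 V), IsBinary T ∧
      sseq T 1 = 2 ∧ sseq T 2 = 2 ∧ sseq T 3 = 2 ∧ sseq T 4 = 2 ∧ sseq T 5 = 3 := by
  rintro ⟨V, _, T, hT, -, -, -, h4, h5⟩
  have hc : 4 ≤ numCherries T := mseq_two_eq_numCherries T ▸ le_mseq_of_sseq_eq h4 two_ne_zero
  have hlt : mseq T 2 < mseq T 3 :=
    (mseq_lt_of_lt_sseq (by rw [h5]; norm_num)).trans_le (le_mseq_of_sseq_eq h5 three_ne_zero)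
  obtain ⟨e, he, he3⟩ := exists_splitSizeE_eq_of_mseq_lt hlt
  obtain ⟨u, v, -, huv, h3⟩ := T.exists_adj_ncard_sideLeaves_eq he
  have := T.even_ncard_sideLeaves hT (by omega) huv (by omega) (by omega)
  rw [h3, he3] at this
  exact absurd this (by decide)
end

section
/- Let f : {2,...,⌊n/2⌋} → ℝ≥0 be strictly increasing, and let τ be a binary phylogenetic tree containing an inner edge whose removal yields four leaf subsets X_1, X_2 (on one side) and X_3, X_4 (on the other side) with |X_i| = x_i. If τ is an NNI-local minimum of Φ_f, then min(x_1+x_2, x_3+x_4) ≤ min(x_1+x_3, x_2+x_4) and min(x_1+x_2, x_3+x_4) ≤ min(x_1+x_4, x_2+x_3). -/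
open SimpleGraph

variable {n : ℕ} {V : Type} [Fintype V]

/-!
Swap the branches at `a₂` and `b₁` by an NNI move across `uv`. Every edge other than `uv` keeps
its split: an untouched edge separates the same leaves, and the two moved pendant edges carry their
branches with them. So `Φ_f` changes only in the term of `uv`, whose split goes from
`x₁ + x₂ | x₃ + x₄` to `x₁ + x₃ | x₂ + x₄`. Every branch contains a leaf, so both sizes lie in
`[2, n / 2]`, and if the new size were smaller, strict monotonicity of `f` would make the move
decrease `Φ_f`. Swapping `a₂` with `b₂` instead gives the second inequality.

Branches are compared through the forest left after deleting every edge at `u` and `v`, which the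
move does not change.
-/

namespace SimpleGraph

section Reachability

variable {V : Type*} {G H : SimpleGraph V}

theorem Reachable.of_forall_adj (h : ∀ ⦃x y⦄, G.Adj x y → H.Reachable x y) {x y : V}
    (hxy : G.Reachable x y) : H.Reachable x y := by
  obtain ⟨p⟩ := hxy
  induction p with
  | nil => rfl
  | cons hadj _ ih => exact (h hadj).trans ih

theorem reachable_deleteEdges_iff_of_forall_not_reachable {S : Set (Sym2 V)} {w : V}
    (hS : ∀ e ∈ S, ∃ y ∈ e, ¬ G.Reachable y w) {x : V} :
    (G.deleteEdges S).Reachable x w ↔ G.Reachable x w := by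
  refine ⟨fun h => h.mono (deleteEdges_le _), fun h => ?_⟩
  obtain ⟨p⟩ := h
  induction p with
  | nil => rfl
  | cons hxz q ih =>
    refine Adj.reachable ((deleteEdges_adj ..).mpr ⟨hxz, fun he => ?_⟩) |>.trans (ih hS)
    obtain ⟨y, hy, hyw⟩ := hS _ he
    rcases Sym2.mem_iff.mp hy with rfl | rfl
    exacts [hyw ⟨.cons hxz q⟩, hyw ⟨q⟩]

theorem IsAcyclic.not_reachable_deleteEdges_s12 (hG : G.IsAcyclic) {u w : V} (h : G.Adj u w) :
    ¬ (G.deleteEdges {s(u, w)}).Reachable u w :=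
  isBridge_iff.mp (isAcyclic_iff_forall_adj_isBridge.mp hG h)

theorem Reachable.of_mk_eq {p q x y : V} (h : s(p, q) = s(x, y)) (hxy : G.Reachable x y) :
    G.Reachable p q := by
  rcases Sym2.eq_iff.mp h with ⟨rfl, rfl⟩ | ⟨rfl, rfl⟩
  exacts [hxy, hxy.symm]

theorem Preconnected.reachable_deleteEdges_or (hG : G.Preconnected) (u w x : V) :
    (G.deleteEdges {s(u, w)}).Reachable x u ∨ (G.deleteEdges {s(u, w)}).Reachable x w := by
  have h := (reachable_iff_reflTransGen x u).mp (hG x u)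
  induction h using Relation.ReflTransGen.head_induction_on with
  | refl => exact .inl .rfl
  | @head x z hxz _ ih =>
    by_cases he : s(x, z) = s(u, w)
    · rcases Sym2.eq_iff.mp he with ⟨rfl, -⟩ | ⟨rfl, -⟩
      exacts [.inl .rfl, .inr .rfl]
    · have hadj : (G.deleteEdges {s(u, w)}).Adj x z := (deleteEdges_adj ..).mpr ⟨hxz, he⟩
      exact ih.imp hadj.reachable.trans hadj.reachable.trans

theorem eq_or_exists_reachable_of_reachable_deleteEdges {u v x : V} (h : (G.deleteEdges {s(u, v)}).Reachable x u) :
    x = u ∨ ∃ w, G.Adj u w ∧ w ≠ v ∧ (G.deleteEdges {s(u, w)}).Reachable x w := by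
  rw [reachable_iff_reflTransGen] at h
  induction h using Relation.ReflTransGen.head_induction_on with
  | refl => exact .inl rfl
  | @head x z hxz _ ih =>
    obtain ⟨hadj, hne⟩ := (deleteEdges_adj ..).mp hxz
    rcases ih with rfl | ⟨w, huw, hwv, hzw⟩
    · refine .inr ⟨x, hadj.symm, ?_, .rfl⟩
      rintro rfl
      exact hne (by simp [Sym2.eq_swap])
    · by_cases he : s(x, z) = s(u, w)
      · rcases Sym2.eq_iff.mp he with ⟨rfl, -⟩ | ⟨rfl, -⟩
        exacts [.inl rfl, .inr ⟨x, huw, hwv, .rfl⟩]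
      · exact .inr ⟨w, huw, hwv, ((deleteEdges_adj ..).mpr ⟨hadj, he⟩).reachable.trans hzw⟩

theorem IsAcyclic.reachable_deleteEdges_of_adj (hG : G.IsAcyclic) {u v w x : V}
    (huw : G.Adj u w) (hwv : w ≠ v) (h : (G.deleteEdges {s(u, w)}).Reachable x w) :
    (G.deleteEdges {s(u, v)}).Reachable x u := by
  have hx : ((G.deleteEdges {s(u, w)}).deleteEdges {s(u, v)}).Reachable x w := by
    rw [reachable_deleteEdges_iff_of_forall_not_reachable]
    · exact h
    · rintro e rfl
      exact ⟨u, Sym2.mem_mk_left _ _, hG.not_reachable_deleteEdges_s12 huw⟩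
  refine (hx.mono ?_).trans (Adj.reachable ((deleteEdges_adj ..).mpr ⟨huw.symm, ?_⟩))
  · rw [deleteEdges_deleteEdges]
    exact deleteEdges_anti Set.subset_union_right
  · rw [Set.mem_singleton_iff, Sym2.eq_iff]
    rintro (⟨rfl, -⟩ | ⟨rfl, -⟩)
    exacts [huw.ne rfl, hwv rfl]

theorem IsAcyclic.reachable_deleteEdges_iff (hG : G.IsAcyclic) {u v x : V} :
    (G.deleteEdges {s(u, v)}).Reachable x u ↔
      x = u ∨ ∃ w, G.Adj u w ∧ w ≠ v ∧ (G.deleteEdges {s(u, w)}).Reachable x w := by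
  refine ⟨eq_or_exists_reachable_of_reachable_deleteEdges, ?_⟩
  rintro (rfl | ⟨w, huw, hwv, h⟩)
  exacts [.rfl, hG.reachable_deleteEdges_of_adj huw hwv h]

theorem IsAcyclic.not_reachable_and_reachable (hG : G.IsAcyclic) {u p q x : V}
    (hp : G.Adj u p) (hq : G.Adj u q) (hpq : p ≠ q) :
    ¬ ((G.deleteEdges {s(u, p)}).Reachable x p ∧ (G.deleteEdges {s(u, q)}).Reachable x q) :=
  fun ⟨hxp, hxq⟩ => hG.not_reachable_deleteEdges_s12 hp
    ((hG.reachable_deleteEdges_of_adj hq hpq.symm hxq).symm.trans hxp)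

theorem IsAcyclic.reachable_deleteEdges_iff_of_forall_mem {S : Set (Sym2 V)} (hG : G.IsAcyclic)
    {p q w x : V} (hpw : G.Adj p w) (hpq : G.Adj p q) (hqw : q ≠ w) (hS : s(p, w) ∈ S)
    (hSpq : ∀ e ∈ S, p ∈ e ∨ q ∈ e) :
    (G.deleteEdges S).Reachable x w ↔ (G.deleteEdges {s(p, w)}).Reachable x w := by
  have hp : ¬ (G.deleteEdges {s(p, w)}).Reachable p w := hG.not_reachable_deleteEdges_s12 hpw
  rw [← reachable_deleteEdges_iff_of_forall_not_reachable (G := G.deleteEdges {s(p, w)}) (S := S),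
    deleteEdges_deleteEdges, Set.singleton_union, Set.insert_eq_of_mem hS]
  intro e he
  rcases hSpq e he with h | h
  · exact ⟨p, h, hp⟩
  · refine ⟨q, h, fun hq => hp (.trans (Adj.reachable ((deleteEdges_adj ..).mpr ⟨hpq, ?_⟩)) hq)⟩
    rw [Set.mem_singleton_iff, Sym2.eq_iff]
    rintro (⟨-, h⟩ | ⟨-, h⟩)
    exacts [hqw h, hpq.ne h.symm]

theorem IsAcyclic.exists_ncard_neighborSet_eq_one [Finite V] (hG : G.IsAcyclic) {u w : V}
    (huw : G.Adj u w) :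
    ∃ z, (G.neighborSet z).ncard = 1 ∧ (G.deleteEdges {s(u, w)}).Reachable z w := by
  induction hB : {x | (G.deleteEdges {s(u, w)}).Reachable x w} using WellFoundedLT.induction
    generalizing u w with
  | ind B ih =>
    subst hB
    by_cases hw : (G.neighborSet w).ncard = 1
    · exact ⟨w, hw, .rfl⟩
    obtain ⟨c, hwc, hcu⟩ : ∃ c, G.Adj w c ∧ c ≠ u := by
      by_contra! h
      exact hw (Set.ncard_eq_one.mpr ⟨u, Set.eq_singleton_iff_unique_mem.mpr ⟨huw.symm, h⟩⟩)
    have hsub : ∀ x, (G.deleteEdges {s(w, c)}).Reachable x c →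
        (G.deleteEdges {s(u, w)}).Reachable x w := fun x hx => by
      simpa [Sym2.eq_swap] using hG.reachable_deleteEdges_of_adj hwc hcu hx
    obtain ⟨z, hz, hzc⟩ := ih _ ⟨hsub, fun h => hG.not_reachable_deleteEdges_s12 hwc (h .rfl)⟩ hwc rfl
    exact ⟨z, hz, hsub z hzc⟩

theorem IsAcyclic.not_adj_of_adj_of_adj (hG : G.IsAcyclic) {x y z : V} (hxy : G.Adj x y)
    (hyz : G.Adj y z) (hzx : z ≠ x) : ¬ G.Adj x z := by
  intro hxz
  have h₁ : (G.deleteEdges {s(x, y)}).Adj x z := by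
    refine (deleteEdges_adj ..).mpr ⟨hxz, ?_⟩
    rw [Set.mem_singleton_iff, Sym2.congr_right]
    exact hyz.ne.symm
  have h₂ : (G.deleteEdges {s(x, y)}).Adj z y := by
    refine (deleteEdges_adj ..).mpr ⟨hyz.symm, ?_⟩
    simp [hzx, hxy.ne.symm]
  exact hG.not_reachable_deleteEdges_s12 hxy (h₁.reachable.trans h₂.reachable)

end Reachability

section NNI

variable {V : Type*} {G : SimpleGraph V} {u v a b : V}

/-- The NNI move across `uv` exchanging the subtree at `a` (behind `u`) with the one at `b`
(behind `v`). -/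
def nniSwap (G : SimpleGraph V) (u v a b : V) : SimpleGraph V :=
  fromEdgeSet ((G.edgeSet \ {s(u, a), s(v, b)}) ∪ {s(u, b), s(v, a)})

theorem nniSwap_comm (G : SimpleGraph V) (u v a b : V) : G.nniSwap u v a b = G.nniSwap v u b a := by
  rw [nniSwap, nniSwap, Set.pair_comm, Set.pair_comm (s(u, b))]

theorem edgeSet_nniSwap (hub : u ≠ b) (hva : v ≠ a) :
    (G.nniSwap u v a b).edgeSet = (G.edgeSet \ {s(u, a), s(v, b)}) ∪ {s(u, b), s(v, a)} := by
  rw [nniSwap, edgeSet_fromEdgeSet, sdiff_eq_left, Set.disjoint_left]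
  rintro e (⟨he, -⟩ | he) hd
  · exact G.not_isDiag_of_mem_edgeSet he hd
  · rcases he with rfl | rfl
    exacts [hub (Sym2.mk_isDiag_iff.mp hd), hva (Sym2.mk_isDiag_iff.mp hd)]

theorem nniSwap_adj (hub : u ≠ b) (hva : v ≠ a) {x y : V} :
    (G.nniSwap u v a b).Adj x y ↔
      G.Adj x y ∧ s(x, y) ≠ s(u, a) ∧ s(x, y) ≠ s(v, b) ∨
        s(x, y) = s(u, b) ∨ s(x, y) = s(v, a) := by
  rw [← mem_edgeSet, edgeSet_nniSwap hub hva]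
  simp only [Set.mem_union, Set.mem_sdiff, Set.mem_insert_iff, Set.mem_singleton_iff, mem_edgeSet,
    not_or]

theorem nniSwap_adj_of_adj (hub : u ≠ b) (hva : v ≠ a) {x y : V} (h : G.Adj x y)
    (ha : s(x, y) ≠ s(u, a)) (hb : s(x, y) ≠ s(v, b)) : (G.nniSwap u v a b).Adj x y :=
  (nniSwap_adj hub hva).mpr (.inl ⟨h, ha, hb⟩)

theorem Adj.nniSwap (huv : G.Adj u v) (hub : u ≠ b) (hva : v ≠ a) :
    (G.nniSwap u v a b).Adj u v :=
  nniSwap_adj_of_adj hub hva huv (by simp [hva, huv.ne.symm]) (by simp [huv.ne, hub])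

theorem nniSwap_adj_left (hub : u ≠ b) (hva : v ≠ a) : (G.nniSwap u v a b).Adj u b :=
  (nniSwap_adj hub hva).mpr (.inr (.inl rfl))

theorem nniSwap_adj_right (hub : u ≠ b) (hva : v ≠ a) : (G.nniSwap u v a b).Adj v a :=
  (nniSwap_adj hub hva).mpr (.inr (.inr rfl))

theorem exists_perm_nniSwap_adj_iff (huv : G.Adj u v) (hua : G.Adj u a) (hvb : G.Adj v b)
    (hub : u ≠ b) (hva : v ≠ a) (hub' : ¬ G.Adj u b) (hva' : ¬ G.Adj v a) (w : V) :
    ∃ τ : Equiv.Perm V, ∀ y, (G.nniSwap u v a b).Adj w y ↔ G.Adj w (τ y) := by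
  classical
  -- At `u, v` the move exchanges the neighbours `a, b`; at `a, b` it exchanges `u, v`.
  have hab : a ≠ b := by rintro rfl; exact hva' hvb
  have := huv.ne; have := hua.ne; have := hvb.ne
  by_cases hw : w = u ∨ w = v
  · refine ⟨Equiv.swap a b, fun y => ?_⟩
    rw [nniSwap_adj hub hva]
    rcases hw with rfl | rfl <;> rcases eq_or_ne y a with rfl | hya <;>
      rcases eq_or_ne y b with rfl | hyb
    all_goals simp_all [Equiv.swap_apply_of_ne_of_ne, eq_comm]
  by_cases hw' : w = a ∨ w = b
  · refine ⟨Equiv.swap u v, fun y => ?_⟩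
    rw [nniSwap_adj hub hva]
    rcases hw' with rfl | rfl <;> rcases eq_or_ne y u with rfl | hyu <;>
      rcases eq_or_ne y v with rfl | hyv
    all_goals simp_all [Equiv.swap_apply_of_ne_of_ne, adj_comm, eq_comm]
  refine ⟨1, fun y => ?_⟩
  rw [nniSwap_adj hub hva]
  simp_all [eq_comm]

theorem eq_or_eq_or_adj_of_nniSwap_adj (huv : u ≠ v) (hub : u ≠ b) (hva : v ≠ a) {w : V}
    (h : (G.nniSwap u v a b).Adj u w) : w = v ∨ w = b ∨ G.Adj u w ∧ w ≠ a := by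
  rcases (nniSwap_adj hub hva).mp h with ⟨h, hne, -⟩ | h | h
  · exact .inr (.inr ⟨h, by rintro rfl; exact hne rfl⟩)
  · rcases Sym2.eq_iff.mp h with ⟨-, rfl⟩ | ⟨rfl, -⟩
    exacts [.inr (.inl rfl), absurd rfl hub]
  · rcases Sym2.eq_iff.mp h with ⟨rfl, -⟩ | ⟨-, rfl⟩
    exacts [absurd rfl huv, .inl rfl]

theorem ncard_neighborSet_nniSwap (huv : G.Adj u v) (hua : G.Adj u a) (hvb : G.Adj v b)
    (hub : u ≠ b) (hva : v ≠ a) (hub' : ¬ G.Adj u b) (hva' : ¬ G.Adj v a) (w : V) :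
    ((G.nniSwap u v a b).neighborSet w).ncard = (G.neighborSet w).ncard := by
  obtain ⟨τ, hτ⟩ := exists_perm_nniSwap_adj_iff huv hua hvb hub hva hub' hva' w
  rw [show (G.nniSwap u v a b).neighborSet w = τ ⁻¹' G.neighborSet w from Set.ext hτ,
    Set.ncard_preimage_of_injective_subset_range τ.injective (by simp)]

theorem nniSwap_deleteEdges (hub : u ≠ b) (hva : v ≠ a) {S : Set (Sym2 V)} (hua : s(u, a) ∈ S)
    (hvb : s(v, b) ∈ S) (hub' : s(u, b) ∈ S) (hva' : s(v, a) ∈ S) :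
    (G.nniSwap u v a b).deleteEdges S = G.deleteEdges S := by
  ext x y
  simp only [deleteEdges_adj, nniSwap_adj hub hva]
  constructor
  · rintro ⟨⟨h, -⟩ | h | h, hS⟩
    exacts [⟨h, hS⟩, (hS (h ▸ hub')).elim, (hS (h ▸ hva')).elim]
  · rintro ⟨h, hS⟩
    exact ⟨.inl ⟨h, fun he => hS (he ▸ hua), fun he => hS (he ▸ hvb)⟩, hS⟩

theorem nniSwap_reachable_deleteEdges_iff (huv : G.Adj u v) (hua : G.Adj u a) (hvb : G.Adj v b)
    (hub : u ≠ b) (hva : v ≠ a) {S : Set (Sym2 V)} (huvS : s(u, v) ∉ S) (huaS : s(u, a) ∉ S)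
    (hvbS : s(v, b) ∉ S) (hubS : s(u, b) ∉ S) (hvaS : s(v, a) ∉ S) {x y : V} :
    ((G.nniSwap u v a b).deleteEdges S).Reachable x y ↔ (G.deleteEdges S).Reachable x y := by
  have hadj : ∀ {H : SimpleGraph V} {p q : V}, H.Adj p q → s(p, q) ∉ S →
      (H.deleteEdges S).Adj p q :=
    fun h hS => (deleteEdges_adj ..).mpr ⟨h, hS⟩
  constructor
  · refine Reachable.of_forall_adj fun p q hpq => ?_
    obtain ⟨hpq, hS⟩ := (deleteEdges_adj ..).mp hpq
    rcases (nniSwap_adj hub hva).mp hpq with ⟨h, -⟩ | h | h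
    · exact (hadj h hS).reachable
    · exact .of_mk_eq h ((hadj huv huvS).reachable.trans (hadj hvb hvbS).reachable)
    · exact .of_mk_eq h ((hadj huv huvS).symm.reachable.trans (hadj hua huaS).reachable)
  · have huv' := hadj (huv.nniSwap hub hva) huvS
    refine Reachable.of_forall_adj fun p q hpq => ?_
    obtain ⟨hpq, hS⟩ := (deleteEdges_adj ..).mp hpq
    by_cases h₁ : s(p, q) = s(u, a)
    · exact .of_mk_eq h₁ (huv'.reachable.trans (hadj (nniSwap_adj_right hub hva) hvaS).reachable)
    by_cases h₂ : s(p, q) = s(v, b)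
    · exact .of_mk_eq h₂
        (huv'.symm.reachable.trans (hadj (nniSwap_adj_left hub hva) hubS).reachable)
    exact (hadj (nniSwap_adj_of_adj hub hva hpq h₁ h₂) hS).reachable

theorem isTree_nniSwap [Finite V] (hG : G.IsTree) (huv : G.Adj u v) (hua : G.Adj u a)
    (hvb : G.Adj v b) (hub : u ≠ b) (hva : v ≠ a) (hub' : ¬ G.Adj u b) (hva' : ¬ G.Adj v a) :
    (G.nniSwap u v a b).IsTree := by
  rw [isTree_iff_connected_and_card] at hG ⊢
  refine ⟨(connected_iff _).mpr ⟨fun x y => ?_, hG.1.nonempty⟩, ?_⟩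
  · have h := nniSwap_reachable_deleteEdges_iff (x := x) (y := y) huv hua hvb hub hva
      (Set.notMem_empty _) (Set.notMem_empty _) (Set.notMem_empty _) (Set.notMem_empty _)
      (Set.notMem_empty _)
    rw [deleteEdges_empty, deleteEdges_empty] at h
    exact h.mpr (hG.1.preconnected x y)
  · have hsub : {s(u, a), s(v, b)} ⊆ G.edgeSet := Set.pair_subset hua hvb
    have hdisj : Disjoint (G.edgeSet \ {s(u, a), s(v, b)}) {s(u, b), s(v, a)} := by
      rw [Set.disjoint_right]
      rintro e (rfl | rfl) he
      exacts [hub' he.1, hva' he.1]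
    rw [← hG.2, Nat.card_coe_set_eq, Nat.card_coe_set_eq, edgeSet_nniSwap hub hva,
      Set.ncard_union_eq hdisj, ← Set.ncard_sdiff_add_ncard_of_subset hsub, Set.ncard_pair,
      Set.ncard_pair]
    exacts [by simp [huv.ne, hub], by simp [huv.ne, hua.ne]]

end NNI

end SimpleGraph

section Splits

variable {V : Type} {G : SimpleGraph V} {leaf : Fin n → V} {u v : V}

theorem splitSide_eq_ncard_swap (G : SimpleGraph V) (leaf : Fin n → V) (u v : V) :
    splitSide G leaf v u = {i | (G.deleteEdges {s(u, v)}).Reachable (leaf i) v}.ncard := by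
  rw [splitSide, Sym2.eq_swap]

theorem splitSide_add_splitSide_s12 (hG : G.IsTree) (huv : G.Adj u v) :
    splitSide G leaf u v + splitSide G leaf v u = n := by
  have hcompl : {i | (G.deleteEdges {s(u, v)}).Reachable (leaf i) v} =
      {i | (G.deleteEdges {s(u, v)}).Reachable (leaf i) u}ᶜ := by
    ext i
    refine ⟨fun hv hu => hG.isAcyclic.not_reachable_deleteEdges_s12 huv (hu.symm.trans hv),
      fun hu => (hG.connected.preconnected.reachable_deleteEdges_or u v _).resolve_left hu⟩
  rw [splitSide_eq_ncard_swap G leaf u v, hcompl, splitSide, Set.ncard_add_ncard_compl,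
    Nat.card_fin]

theorem splitSide_eq_add_s12 (hG : G.IsAcyclic) {p q : V} (hu : ∀ i, leaf i ≠ u) (hp : G.Adj u p)
    (hq : G.Adj u q) (hpq : p ≠ q) (hpv : p ≠ v) (hqv : q ≠ v)
    (hN : ∀ w, G.Adj u w → w = v ∨ w = p ∨ w = q) :
    splitSide G leaf u v = splitSide G leaf p u + splitSide G leaf q u := by
  have hside : {i | (G.deleteEdges {s(u, v)}).Reachable (leaf i) u} =
      {i | (G.deleteEdges {s(u, p)}).Reachable (leaf i) p} ∪
        {i | (G.deleteEdges {s(u, q)}).Reachable (leaf i) q} := by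
    ext i
    simp only [Set.mem_ofPred_eq, Set.mem_union, hG.reachable_deleteEdges_iff, hu i, false_or]
    constructor
    · rintro ⟨w, huw, hwv, h⟩
      rcases hN w huw with rfl | rfl | rfl
      exacts [absurd rfl hwv, .inl h, .inr h]
    · rintro (h | h)
      exacts [⟨p, hp, hpv, h⟩, ⟨q, hq, hqv, h⟩]
  rw [splitSide, hside, Set.ncard_union_eq, ← splitSide_eq_ncard_swap,
    ← splitSide_eq_ncard_swap]
  exact Set.disjoint_left.mpr fun i hip hiq =>
    hG.not_reachable_and_reachable hp hq hpq ⟨hip, hiq⟩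

theorem splitSide_eq_ncard_deleteEdges (hG : G.IsAcyclic) {p q w : V} {S : Set (Sym2 V)}
    (hpw : G.Adj p w) (hpq : G.Adj p q) (hqw : q ≠ w) (hS : s(p, w) ∈ S)
    (hSpq : ∀ e ∈ S, p ∈ e ∨ q ∈ e) :
    splitSide G leaf w p = {i | (G.deleteEdges S).Reachable (leaf i) w}.ncard := by
  simp only [splitSide_eq_ncard_swap,
    hG.reachable_deleteEdges_iff_of_forall_mem hpw hpq hqw hS hSpq]

theorem splitSide_pos [Finite V] (hG : G.IsAcyclic)
    (hleaf : ∀ z, (G.neighborSet z).ncard = 1 → ∃ i, leaf i = z) (huv : G.Adj u v) :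
    0 < splitSide G leaf v u := by
  obtain ⟨z, hz, hzv⟩ := hG.exists_ncard_neighborSet_eq_one huv
  obtain ⟨i, rfl⟩ := hleaf z hz
  rw [splitSide_eq_ncard_swap]
  exact (Set.ncard_pos (Set.toFinite _)).mpr ⟨i, hzv⟩

theorem splitSide_nniSwap {a b p q : V} (huv : G.Adj u v) (hua : G.Adj u a) (hvb : G.Adj v b)
    (hub : u ≠ b) (hva : v ≠ a)
    (hpq : s(p, q) ∉ ({s(u, v), s(u, a), s(v, b), s(u, b), s(v, a)} : Set (Sym2 V))) :
    splitSide (G.nniSwap u v a b) leaf p q = splitSide G leaf p q := by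
  have hS : ∀ e ∈ ({s(u, v), s(u, a), s(v, b), s(u, b), s(v, a)} : Set (Sym2 V)),
      e ∉ ({s(p, q)} : Set (Sym2 V)) := fun e he h => hpq (Set.mem_singleton_iff.mp h ▸ he)
  simp only [splitSide, nniSwap_reachable_deleteEdges_iff huv hua hvb hub hva
    (hS _ (by simp)) (hS _ (by simp)) (hS _ (by simp)) (hS _ (by simp)) (hS _ (by simp))]

theorem splitSide_nniSwap_branch {a b : V} (hG : G.IsAcyclic)
    (hG' : (G.nniSwap u v a b).IsAcyclic) (huv : G.Adj u v) (hua : G.Adj u a) (hvb : G.Adj v b)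
    (hub : u ≠ b) (hva : v ≠ a) :
    splitSide (G.nniSwap u v a b) leaf b u = splitSide G leaf b v ∧
      splitSide (G.nniSwap u v a b) leaf a v = splitSide G leaf a u := by
  -- Deleting every edge at `u` and `v` leaves the same forest in both trees, and each branch
  -- is one of its components.
  set S : Set (Sym2 V) := {e | u ∈ e ∨ v ∈ e}
  have hSuv : ∀ e ∈ S, u ∈ e ∨ v ∈ e := fun _ => id
  have hSvu : ∀ e ∈ S, v ∈ e ∨ u ∈ e := fun _ he => Or.symm he
  have hD : (G.nniSwap u v a b).deleteEdges S = G.deleteEdges S :=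
    nniSwap_deleteEdges hub hva (by simp [S]) (by simp [S]) (by simp [S]) (by simp [S])
  have huv' : (G.nniSwap u v a b).Adj u v := huv.nniSwap hub hva
  constructor
  · rw [splitSide_eq_ncard_deleteEdges hG' (nniSwap_adj_left hub hva) huv' hvb.ne
      (by simp [S]) hSuv, hD, splitSide_eq_ncard_deleteEdges hG hvb huv.symm hub (by simp [S]) hSvu]
  · rw [splitSide_eq_ncard_deleteEdges hG' (nniSwap_adj_right hub hva) huv'.symm hua.ne
      (by simp [S]) hSvu, hD,
      splitSide_eq_ncard_deleteEdges hG hua huv hva (by simp [S]) hSuv]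

theorem splitSide_nniSwap_eq_add {a a' b : V} (hG : G.IsAcyclic)
    (hG' : (G.nniSwap u v a b).IsAcyclic) (hu : ∀ i, leaf i ≠ u) (huv : G.Adj u v)
    (hua : G.Adj u a) (hua' : G.Adj u a') (haa' : a' ≠ a) (ha'v : a' ≠ v) (hvb : G.Adj v b)
    (hub : u ≠ b) (hva : v ≠ a) (hN : ∀ w, G.Adj u w → w = v ∨ w = a' ∨ w = a) :
    splitSide (G.nniSwap u v a b) leaf u v = splitSide G leaf a' u + splitSide G leaf b v := by
  have ha'b : a' ≠ b := by
    rintro rfl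
    exact hG.not_adj_of_adj_of_adj huv hvb hub.symm hua'
  have hua'' : (G.nniSwap u v a b).Adj u a' :=
    nniSwap_adj_of_adj hub hva hua' (by simp [haa', hua'.ne.symm]) (by simp [huv.ne, hub])
  have hN' : ∀ w, (G.nniSwap u v a b).Adj u w → w = v ∨ w = a' ∨ w = b := fun w hw => by
    rcases eq_or_eq_or_adj_of_nniSwap_adj huv.ne hub hva hw with rfl | rfl | ⟨hw, hwa⟩
    · exact .inl rfl
    · exact .inr (.inr rfl)
    · rcases hN w hw with h | h | h
      exacts [.inl h, .inr (.inl h), absurd h hwa]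
  rw [splitSide_eq_add_s12 hG' hu hua'' (nniSwap_adj_left hub hva) ha'b ha'v hvb.ne.symm hN',
    (splitSide_nniSwap_branch hG hG' huv hua hvb hub hva).1,
    splitSide_nniSwap huv hua hvb hub hva (by simp [ha'v, haa', ha'b, huv.ne, hua'.ne.symm])]

end Splits

namespace PhyloTree

variable {T T' : PhyloTree n V} {u v a b : V}

theorem leaf_ne_of_not_isLeaf (hu : ¬ IsLeaf T u) (i : Fin n) : T.leaf i ≠ u :=
  fun h => hu ((T.leaf_iff u).mpr ⟨i, h⟩)

theorem splitSizeE_mk_s12 (T : PhyloTree n V) (p q : V) :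
    splitSizeE T s(p, q) = min (splitSide T.G T.leaf p q) (splitSide T.G T.leaf q p) :=
  rfl

theorem splitSizeE_eq_min_sub {p q : V} (hpq : T.G.Adj p q) :
    splitSizeE T s(p, q) = min (splitSide T.G T.leaf q p) (n - splitSide T.G T.leaf q p) := by
  have := splitSide_add_splitSide_s12 (leaf := T.leaf) T.isTree hpq
  rw [splitSizeE_mk_s12]
  omega

theorem exists_nniMove (huv : T.G.Adj u v) (hu : ¬ IsLeaf T u) (hv : ¬ IsLeaf T v)
    (hua : T.G.Adj u a) (hvb : T.G.Adj v b) (hav : a ≠ v) (hbu : b ≠ u) :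
    ∃ T' : PhyloTree n V, NNIMove T T' ∧ T'.G = T.G.nniSwap u v a b ∧ T'.leaf = T.leaf := by
  have hub : ¬ T.G.Adj u b := T.isTree.isAcyclic.not_adj_of_adj_of_adj huv hvb hbu
  have hva : ¬ T.G.Adj v a := T.isTree.isAcyclic.not_adj_of_adj_of_adj huv.symm hua hav
  let T' : PhyloTree n V :=
    { G := T.G.nniSwap u v a b
      isTree := isTree_nniSwap T.isTree huv hua hvb hbu.symm hav.symm hub hva
      leaf := T.leaf
      leaf_inj := T.leaf_inj
      leaf_iff := fun w => by
        rw [ncard_neighborSet_nniSwap huv hua hvb hbu.symm hav.symm hub hva]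
        exact T.leaf_iff w }
  exact ⟨T', ⟨u, v, a, b, huv, hu, hv, hua, hvb, hav, hbu, rfl, edgeSet_nniSwap hbu.symm hav.symm⟩,
    rfl, rfl⟩

noncomputable def splitWeight (T : PhyloTree n V) (f : ℕ → ℝ) (e : Sym2 V) : ℝ :=
  if 2 ≤ splitSizeE T e then f (splitSizeE T e) else 0

theorem Phi_eq_finsum_splitWeight (T : PhyloTree n V) (f : ℕ → ℝ) :
    Phi T f = ∑ᶠ e ∈ T.G.edgeSet, T.splitWeight f e := by
  rw [Phi, finsum_mem_congr rfl fun e he => (if_pos he.2).symm]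
  refine finsum_mem_inter_support_eq _ _ _ (Set.ext fun e => ?_)
  by_cases h : 2 ≤ splitSizeE T e <;> simp [h]

theorem splitSizeE_of_nniSwap (hG : T'.G = T.G.nniSwap u v a b) (hleaf : T'.leaf = T.leaf)
    (huv : T.G.Adj u v) (hua : T.G.Adj u a) (hvb : T.G.Adj v b) (hub : u ≠ b) (hva : v ≠ a)
    {e : Sym2 V} (he : e ∉ ({s(u, v), s(u, a), s(v, b), s(u, b), s(v, a)} : Set (Sym2 V))) :
    splitSizeE T' e = splitSizeE T e := by
  induction e using Sym2.ind with
  | h p q =>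
    rw [splitSizeE_mk_s12, splitSizeE_mk_s12, hG, hleaf,
      splitSide_nniSwap huv hua hvb hub hva he,
      splitSide_nniSwap huv hua hvb hub hva (by rwa [Sym2.eq_swap (a := q)])]

theorem splitSizeE_of_nniSwap_pendant (hG : T'.G = T.G.nniSwap u v a b)
    (hleaf : T'.leaf = T.leaf) (huv : T.G.Adj u v) (hua : T.G.Adj u a) (hvb : T.G.Adj v b)
    (hav : a ≠ v) (hbu : b ≠ u) :
    splitSizeE T' s(v, a) = splitSizeE T s(u, a) ∧
      splitSizeE T' s(u, b) = splitSizeE T s(v, b) := by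
  have hT' : (T.G.nniSwap u v a b).IsAcyclic := hG ▸ T'.isTree.isAcyclic
  obtain ⟨hb, ha⟩ := splitSide_nniSwap_branch (leaf := T.leaf) T.isTree.isAcyclic hT' huv hua hvb
    hbu.symm hav.symm
  have hva' : T'.G.Adj v a := hG ▸ nniSwap_adj_right hbu.symm hav.symm
  have hub' : T'.G.Adj u b := hG ▸ nniSwap_adj_left hbu.symm hav.symm
  rw [splitSizeE_eq_min_sub hva', splitSizeE_eq_min_sub hua, splitSizeE_eq_min_sub hub',
    splitSizeE_eq_min_sub hvb, hG, hleaf, ha, hb]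
  exact ⟨rfl, rfl⟩

theorem Phi_sub_Phi_of_nniSwap (f : ℕ → ℝ) (hG : T'.G = T.G.nniSwap u v a b)
    (hleaf : T'.leaf = T.leaf) (huv : T.G.Adj u v) (hua : T.G.Adj u a) (hvb : T.G.Adj v b)
    (hav : a ≠ v) (hbu : b ≠ u) :
    Phi T' f - Phi T f = T'.splitWeight f s(u, v) - T.splitWeight f s(u, v) := by
  have hub : ¬ T.G.Adj u b := T.isTree.isAcyclic.not_adj_of_adj_of_adj huv hvb hbu
  have hva : ¬ T.G.Adj v a := T.isTree.isAcyclic.not_adj_of_adj_of_adj huv.symm hua hav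
  set E' := T.G.edgeSet \ {s(u, a), s(v, b)}
  have hT : Phi T f = T.splitWeight f s(u, a) + T.splitWeight f s(v, b) +
      ∑ᶠ e ∈ E', T.splitWeight f e := by
    have hsub : {s(u, a), s(v, b)} ⊆ T.G.edgeSet := Set.pair_subset hua hvb
    have hdisj : Disjoint {s(u, a), s(v, b)} E' := Set.disjoint_sdiff_right
    rw [Phi_eq_finsum_splitWeight, ← Set.union_sdiff_cancel hsub, finsum_mem_union hdisj
      (Set.toFinite _) (Set.toFinite _), finsum_mem_pair (by simp [huv.ne, hbu.symm])]
  have hT' : Phi T' f = ∑ᶠ e ∈ E', T'.splitWeight f e +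
      (T'.splitWeight f s(u, b) + T'.splitWeight f s(v, a)) := by
    have hdisj : Disjoint E' {s(u, b), s(v, a)} := by
      rw [Set.disjoint_right]
      rintro e (rfl | rfl) he
      exacts [hub he.1, hva he.1]
    rw [Phi_eq_finsum_splitWeight, hG, edgeSet_nniSwap hbu.symm hav.symm, finsum_mem_union hdisj
      (Set.toFinite _) (Set.toFinite _), finsum_mem_pair (by simp [huv.ne, hua.ne])]
  have hmid : ∀ g : Sym2 V → ℝ, ∑ᶠ e ∈ E', g e = g s(u, v) + ∑ᶠ e ∈ E' \ {s(u, v)}, g e := by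
    have huvE : s(u, v) ∈ E' := ⟨huv, by simp [hav.symm, huv.ne, huv.ne.symm, hbu.symm]⟩
    intro g
    rw [← finsum_mem_insert _ (fun h => h.2 rfl) (Set.toFinite _), Set.insert_sdiff_singleton,
      Set.insert_eq_of_mem huvE]
  have hrest : ∀ e ∈ E' \ {s(u, v)}, T'.splitWeight f e = T.splitWeight f e := by
    rintro e ⟨⟨he, he'⟩, huv'⟩
    have hne : e ∉ ({s(u, v), s(u, a), s(v, b), s(u, b), s(v, a)} : Set (Sym2 V)) := by
      simp only [Set.mem_insert_iff, Set.mem_singleton_iff, not_or] at he' huv' ⊢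
      exact ⟨huv', he'.1, he'.2, by rintro rfl; exact hub he, by rintro rfl; exact hva he⟩
    rw [splitWeight, splitWeight, splitSizeE_of_nniSwap hG hleaf huv hua hvb hbu.symm hav.symm hne]
  obtain ⟨ha, hb⟩ := splitSizeE_of_nniSwap_pendant hG hleaf huv hua hvb hav hbu
  rw [hT, hT', hmid, hmid, finsum_mem_congr rfl hrest]
  simp only [splitWeight, ha, hb]
  ring

theorem eq_or_eq_or_eq_of_isBinary (hbin : IsBinary T) (hu : ¬ IsLeaf T u) {p q r : V}
    (hp : T.G.Adj u p) (hq : T.G.Adj u q) (hr : T.G.Adj u r) (hpq : p ≠ q) (hpr : p ≠ r)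
    (hqr : q ≠ r) {w : V} (hw : T.G.Adj u w) : w = p ∨ w = q ∨ w = r := by
  have hsub : {p, q, r} ⊆ T.G.neighborSet u := by
    rintro x (rfl | rfl | rfl) <;> assumption
  have hN := Set.eq_of_subset_of_ncard_le hsub (by
    rw [(hbin u).resolve_left hu, Set.ncard_eq_three.mpr ⟨p, q, r, hpq, hpr, hqr, rfl⟩])
  have hw' : w ∈ ({p, q, r} : Set V) := by rw [hN]; exact hw
  simpa using hw'

theorem splitSizeE_le_half {p q : V} (hpq : T.G.Adj p q) : splitSizeE T s(p, q) ≤ n / 2 := by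
  rw [splitSizeE_eq_min_sub hpq]
  omega

theorem splitSizeE_of_nniSwap_center {a₁ a₂ b₁ b₂ : V} (hG : T'.G = T.G.nniSwap u v a₂ b₁)
    (hleaf : T'.leaf = T.leaf) (huv : T.G.Adj u v) (hu : ¬ IsLeaf T u) (hv : ¬ IsLeaf T v)
    (ha₁ : T.G.Adj u a₁) (ha₂ : T.G.Adj u a₂) (ha : a₁ ≠ a₂) (ha₁v : a₁ ≠ v) (ha₂v : a₂ ≠ v)
    (hb₁ : T.G.Adj v b₁) (hb₂ : T.G.Adj v b₂) (hb : b₁ ≠ b₂) (hb₁u : b₁ ≠ u) (hb₂u : b₂ ≠ u)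
    (hNu : ∀ w, T.G.Adj u w → w = v ∨ w = a₁ ∨ w = a₂)
    (hNv : ∀ w, T.G.Adj v w → w = u ∨ w = b₂ ∨ w = b₁) :
    splitSizeE T' s(u, v) = min (splitSide T.G T.leaf a₁ u + splitSide T.G T.leaf b₁ v)
      (splitSide T.G T.leaf a₂ u + splitSide T.G T.leaf b₂ v) := by
  have hT := T.isTree.isAcyclic
  have hT' : (T.G.nniSwap u v a₂ b₁).IsAcyclic := hG ▸ T'.isTree.isAcyclic
  have hT'' : (T.G.nniSwap v u b₁ a₂).IsAcyclic := nniSwap_comm T.G u v a₂ b₁ ▸ hT'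
  rw [splitSizeE_mk_s12, hG, hleaf, splitSide_nniSwap_eq_add hT hT' (leaf_ne_of_not_isLeaf hu) huv ha₂
    ha₁ ha ha₁v hb₁ hb₁u.symm ha₂v.symm hNu, nniSwap_comm, splitSide_nniSwap_eq_add hT hT''
    (leaf_ne_of_not_isLeaf hv) huv.symm hb₁ hb₂ hb.symm hb₂u ha₂ ha₂v.symm hb₁u.symm hNv,
    add_comm (splitSide _ _ b₂ v)]

theorem min_le_min_of_forall_nniMove (hbin : IsBinary T) (f : ℕ → ℝ)
    (hf : ∀ a b, 2 ≤ a → a < b → b ≤ n / 2 → f a < f b)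
    (hmin : ∀ T' : PhyloTree n V, NNIMove T T' → Phi T f ≤ Phi T' f)
    {a₁ a₂ b₁ b₂ : V} (huv : T.G.Adj u v) (hu : ¬ IsLeaf T u) (hv : ¬ IsLeaf T v)
    (ha₁ : T.G.Adj u a₁) (ha₂ : T.G.Adj u a₂) (ha : a₁ ≠ a₂) (ha₁v : a₁ ≠ v) (ha₂v : a₂ ≠ v)
    (hb₁ : T.G.Adj v b₁) (hb₂ : T.G.Adj v b₂) (hb : b₁ ≠ b₂) (hb₁u : b₁ ≠ u) (hb₂u : b₂ ≠ u) :
    min (splitSide T.G T.leaf a₁ u + splitSide T.G T.leaf a₂ u)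
        (splitSide T.G T.leaf b₁ v + splitSide T.G T.leaf b₂ v) ≤
      min (splitSide T.G T.leaf a₁ u + splitSide T.G T.leaf b₁ v)
        (splitSide T.G T.leaf a₂ u + splitSide T.G T.leaf b₂ v) := by
  have hT := T.isTree.isAcyclic
  have hNu : ∀ w, T.G.Adj u w → w = v ∨ w = a₁ ∨ w = a₂ :=
    fun w => eq_or_eq_or_eq_of_isBinary hbin hu huv ha₁ ha₂ ha₁v.symm ha₂v.symm ha
  have hNv : ∀ w, T.G.Adj v w → w = u ∨ w = b₂ ∨ w = b₁ :=
    fun w => eq_or_eq_or_eq_of_isBinary hbin hv huv.symm hb₂ hb₁ hb₂u.symm hb₁u.symm hb.symm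
  obtain ⟨T', hmove, hG, hleaf⟩ := T.exists_nniMove huv hu hv ha₂ hb₁ ha₂v hb₁u
  have hPhi := Phi_sub_Phi_of_nniSwap f hG hleaf huv ha₂ hb₁ ha₂v hb₁u
  have hsz : splitSizeE T s(u, v) = min (splitSide T.G T.leaf a₁ u + splitSide T.G T.leaf a₂ u)
      (splitSide T.G T.leaf b₁ v + splitSide T.G T.leaf b₂ v) := by
    rw [splitSizeE_mk_s12, splitSide_eq_add_s12 hT (leaf_ne_of_not_isLeaf hu) ha₁ ha₂ ha ha₁v ha₂v hNu,
      splitSide_eq_add_s12 hT (leaf_ne_of_not_isLeaf hv) hb₂ hb₁ hb.symm hb₂u hb₁u hNv,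
      add_comm (splitSide _ _ b₂ v)]
  have hsz' := splitSizeE_of_nniSwap_center hG hleaf huv hu hv ha₁ ha₂ ha ha₁v ha₂v hb₁ hb₂ hb hb₁u
    hb₂u hNu hNv
  have hpos : ∀ {p w}, T.G.Adj p w → 0 < splitSide T.G T.leaf w p :=
    splitSide_pos hT fun z hz => (T.leaf_iff z).mp hz
  have := hpos ha₁; have := hpos ha₂; have := hpos hb₁; have := hpos hb₂
  have := splitSizeE_le_half huv
  by_contra hlt
  have hflt := hf (splitSizeE T' s(u, v)) (splitSizeE T s(u, v)) (by omega) (by omega) (by omega)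
  rw [splitWeight, splitWeight, if_pos (by omega), if_pos (by omega)] at hPhi
  linarith [hmin T' hmove]

end PhyloTree

theorem stmt_12_general {n : ℕ} {V : Type} [Fintype V]
    (T : PhyloTree n V) (hbin : IsBinary T)
    (f : ℕ → ℝ)
    (hf : ∀ a b, 2 ≤ a → a < b → b ≤ n / 2 → f a < f b)
    (hmin : ∀ T' : PhyloTree n V, NNIMove T T' → Phi T f ≤ Phi T' f)
    (u v a1 a2 b1 b2 : V)
    (huv : T.G.Adj u v) (hu : ¬ IsLeaf T u) (hv : ¬ IsLeaf T v)
    (ha1 : T.G.Adj u a1) (ha2 : T.G.Adj u a2) (ha : a1 ≠ a2)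
    (ha1v : a1 ≠ v) (ha2v : a2 ≠ v)
    (hb1 : T.G.Adj v b1) (hb2 : T.G.Adj v b2) (hb : b1 ≠ b2)
    (hb1u : b1 ≠ u) (hb2u : b2 ≠ u) :
    min (splitSide T.G T.leaf a1 u + splitSide T.G T.leaf a2 u)
        (splitSide T.G T.leaf b1 v + splitSide T.G T.leaf b2 v) ≤
      min (splitSide T.G T.leaf a1 u + splitSide T.G T.leaf b1 v)
        (splitSide T.G T.leaf a2 u + splitSide T.G T.leaf b2 v) ∧
    min (splitSide T.G T.leaf a1 u + splitSide T.G T.leaf a2 u)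
        (splitSide T.G T.leaf b1 v + splitSide T.G T.leaf b2 v) ≤
      min (splitSide T.G T.leaf a1 u + splitSide T.G T.leaf b2 v)
        (splitSide T.G T.leaf a2 u + splitSide T.G T.leaf b1 v) := by
  refine ⟨T.min_le_min_of_forall_nniMove hbin f hf hmin huv hu hv ha1 ha2 ha ha1v ha2v hb1 hb2 hb
    hb1u hb2u, ?_⟩
  have := T.min_le_min_of_forall_nniMove hbin f hf hmin huv hu hv ha1 ha2 ha ha1v ha2v hb2 hb1
    hb.symm hb2u hb1u
  omega

/-- If `τ` is an NNI-local minimum of `Φ_f` (for strictly increasing `f`), then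
for every inner edge `{u,v}` with attached subtrees of sizes `x₁, x₂ | x₃, x₄`:
`min(x₁+x₂, x₃+x₄) ≤ min(x₁+x₃, x₂+x₄)` and `min(x₁+x₂, x₃+x₄) ≤ min(x₁+x₄, x₂+x₃)`. -/
theorem stmt_12 {n : ℕ} {V : Type} [Fintype V]
    (T : PhyloTree n V) (hbin : IsBinary T)
    (f : ℕ → ℝ) (hf0 : ∀ k, 2 ≤ k → k ≤ n / 2 → 0 ≤ f k)
    (hf : ∀ a b, 2 ≤ a → a < b → b ≤ n / 2 → f a < f b)
    (hmin : ∀ T' : PhyloTree n V, NNIMove T T' → Phi T f ≤ Phi T' f)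
    (u v a1 a2 b1 b2 : V)
    (huv : T.G.Adj u v) (hu : ¬ IsLeaf T u) (hv : ¬ IsLeaf T v)
    (ha1 : T.G.Adj u a1) (ha2 : T.G.Adj u a2) (ha : a1 ≠ a2)
    (ha1v : a1 ≠ v) (ha2v : a2 ≠ v)
    (hb1 : T.G.Adj v b1) (hb2 : T.G.Adj v b2) (hb : b1 ≠ b2)
    (hb1u : b1 ≠ u) (hb2u : b2 ≠ u) :
    min (splitSide T.G T.leaf a1 u + splitSide T.G T.leaf a2 u)
        (splitSide T.G T.leaf b1 v + splitSide T.G T.leaf b2 v) ≤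
      min (splitSide T.G T.leaf a1 u + splitSide T.G T.leaf b1 v)
        (splitSide T.G T.leaf a2 u + splitSide T.G T.leaf b2 v) ∧
    min (splitSide T.G T.leaf a1 u + splitSide T.G T.leaf a2 u)
        (splitSide T.G T.leaf b1 v + splitSide T.G T.leaf b2 v) ≤
      min (splitSide T.G T.leaf a1 u + splitSide T.G T.leaf b2 v)
        (splitSide T.G T.leaf a2 u + splitSide T.G T.leaf b1 v) :=
  stmt_12_general T hbin f hf hmin u v a1 a2 b1 b2 huv hu hv ha1 ha2 ha ha1v ha2v hb1 hb2 hb hb1u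
    hb2u
end
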